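/- arXiv:1301.6448 — 6 statements merged into one kernel-verified Lean document; each statement's English description precedes it below -/
import Mathlib

section
/- The equation C(ϑ·T₀) = 0 has exactly two solutions ϑ in the interval [0, 1), and these two solutions differ by exactly 1/2. -/
/-!
The vector field `(x, y) ↦ (y, -x ^ m)` is locally Lipschitz, so a solution is determined by its
value at a single time. Since `S 0 = 0`, time reversal about `0` shows that `C` is even; since
`m` is odd, time reversal combined with `(C, S) ↦ (-C, -S)` shows that `C (2τ - t) = -C t` at the
first positive zero `τ` of `C`. Together these give `C (t + 2τ) = -C t`, so `4τ` is a period. On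
`[0, τ]` the function `C` decreases from `C 0` to `0`, and the symmetries then show that on
`[0, 4τ)` it vanishes only at `τ` and `3τ` and takes the value `C 0` only at `0`. Hence
`T₀ = 4τ`, and the zeros are at `ϑ = 1/4` and `ϑ = 3/4`.
-/

open Set Function

theorem ODE_solution_unique_of_locallyLipschitz {E : Type*} [NormedAddCommGroup E]
    [NormedSpace ℝ E] {v : E → E} (hv : LocallyLipschitz v) {f g : ℝ → E}
    (hf : ∀ t, HasDerivAt f (v (f t)) t) (hg : ∀ t, HasDerivAt g (v (g t)) t)
    {t₀ : ℝ} (heq : f t₀ = g t₀) : f = g := by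
  ext t
  obtain ⟨a, b, ht, ht₀⟩ : ∃ a b, t ∈ Ioo a b ∧ t₀ ∈ Ioo a b :=
    ⟨min t t₀ - 1, max t t₀ + 1, by grind, by grind⟩
  have hcont {u : ℝ → E} (hu : ∀ t, HasDerivAt u (v (u t)) t) : Continuous u :=
    continuous_iff_continuousAt.2 fun t => (hu t).continuousAt
  -- On a bounded time interval both solutions stay in a compact set, where `v` is Lipschitz.
  set K := f '' Icc a b ∪ g '' Icc a b
  have hK : IsCompact K :=
    (isCompact_Icc.image (hcont hf)).union (isCompact_Icc.image (hcont hg))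
  obtain ⟨L, hL⟩ := hv.locallyLipschitzOn.exists_lipschitzOnWith_of_compact hK
  exact ODE_solution_unique_of_mem_Ioo (v := fun _ => v) (s := fun _ => K) (fun _ _ => hL) ht₀
    (fun s hs => ⟨hf s, .inl (mem_image_of_mem f (Ioo_subset_Icc_self hs))⟩)
    (fun s hs => ⟨hg s, .inr (mem_image_of_mem g (Ioo_subset_Icc_self hs))⟩) heq ht

def IsPowOscSolution (m : ℕ) (C S : ℝ → ℝ) : Prop :=
  ∀ t, HasDerivAt C (S t) t ∧ HasDerivAt S (-(C t ^ m)) t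

namespace IsPowOscSolution

variable {m : ℕ} {C S C₁ S₁ : ℝ → ℝ} {τ : ℝ}

theorem continuous (h : IsPowOscSolution m C S) : Continuous C :=
  continuous_iff_continuousAt.2 fun t => (h t).1.continuousAt

theorem unique (h : IsPowOscSolution m C S) (h₁ : IsPowOscSolution m C₁ S₁) {t₀ : ℝ}
    (hC : C t₀ = C₁ t₀) (hS : S t₀ = S₁ t₀) : C = C₁ ∧ S = S₁ := by
  have hv : LocallyLipschitz fun p : ℝ × ℝ => (p.2, -p.1 ^ m) :=
    (show ContDiff ℝ 1 fun p : ℝ × ℝ => (p.2, -p.1 ^ m) by fun_prop).locallyLipschitz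
  have key := ODE_solution_unique_of_locallyLipschitz hv
    (fun t => (h t).1.prodMk (h t).2) (fun t => (h₁ t).1.prodMk (h₁ t).2) (Prod.ext hC hS)
  exact ⟨funext fun t => congrArg Prod.fst (congrFun key t),
    funext fun t => congrArg Prod.snd (congrFun key t)⟩

theorem reflect (h : IsPowOscSolution m C S) (a : ℝ) :
    IsPowOscSolution m (fun t => C (a - t)) (fun t => -S (a - t)) := by
  intro t
  have hr : HasDerivAt (fun t => a - t) (-1) t := (hasDerivAt_id t).const_sub a
  exact ⟨((h (a - t)).1.comp t hr).congr_deriv (by ring),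
    ((h (a - t)).2.comp t hr).neg.congr_deriv (by ring)⟩

theorem neg (h : IsPowOscSolution m C S) (hm : Odd m) : IsPowOscSolution m (-C) (-S) :=
  fun t => ⟨(h t).1.neg, by simpa [hm.neg_pow] using (h t).2.neg⟩

theorem symm_of_S_eq_zero (h : IsPowOscSolution m C S) {a : ℝ} (ha : S a = 0) (t : ℝ) :
    C (2 * a - t) = C t ∧ S (2 * a - t) = -S t := by
  obtain ⟨hC, hS⟩ := (h.reflect (2 * a)).unique h (t₀ := a) (by ring_nf) (by simp [two_mul, ha])
  exact ⟨congrFun hC t, neg_eq_iff_eq_neg.1 (congrFun hS t)⟩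

theorem antisymm_of_C_eq_zero (h : IsPowOscSolution m C S) (hm : Odd m) {a : ℝ} (ha : C a = 0)
    (t : ℝ) : C (2 * a - t) = -C t ∧ S (2 * a - t) = S t := by
  obtain ⟨hC, hS⟩ := ((h.reflect (2 * a)).neg hm).unique h (t₀ := a) (by simp [two_mul, ha])
    (by simp [two_mul])
  exact ⟨neg_eq_iff_eq_neg.1 (congrFun hC t), by simpa using congrFun hS t⟩

theorem even (h : IsPowOscSolution m C S) (hS0 : S 0 = 0) : Function.Even C := fun t => by
  simpa using (h.symm_of_S_eq_zero hS0 t).1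

theorem odd (h : IsPowOscSolution m C S) (hS0 : S 0 = 0) : Function.Odd S := fun t => by
  simpa using (h.symm_of_S_eq_zero hS0 t).2

theorem antiperiodic (h : IsPowOscSolution m C S) (hm : Odd m) (hS0 : S 0 = 0) (hτ : C τ = 0) :
    Antiperiodic C (2 * τ) ∧ Antiperiodic S (2 * τ) := by
  refine ⟨fun t => ?_, fun t => ?_⟩
  · simpa [sub_neg_eq_add, add_comm t, h.even hS0 t] using
      (h.antisymm_of_C_eq_zero hm hτ (-t)).1
  · simpa [sub_neg_eq_add, add_comm t, h.odd hS0 t] using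
      (h.antisymm_of_C_eq_zero hm hτ (-t)).2

theorem strictAntiOn_Icc (h : IsPowOscSolution m C S) (hS0 : S 0 = 0) {b : ℝ}
    (hpos : ∀ t ∈ Ico 0 b, 0 < C t) : StrictAntiOn C (Icc 0 b) := by
  have hS : StrictAntiOn S (Icc 0 b) :=
    strictAntiOn_of_hasDerivWithinAt_neg (convex_Icc 0 b)
      (HasDerivAt.continuousOn fun t _ => (h t).2) (fun t _ => (h t).2.hasDerivWithinAt)
      fun t ht => by
        rw [interior_Icc] at ht
        exact neg_neg_of_pos (pow_pos (hpos t ⟨ht.1.le, ht.2⟩) m)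
  refine strictAntiOn_of_hasDerivWithinAt_neg (convex_Icc 0 b) h.continuous.continuousOn
    (fun t _ => (h t).1.hasDerivWithinAt) fun t ht => ?_
  rw [interior_Icc] at ht
  simpa [hS0] using hS ⟨le_rfl, ht.1.le.trans ht.2.le⟩ ⟨ht.1.le, ht.2.le⟩ ht.1

theorem exists_first_zero (h : IsPowOscSolution m C S) (hS0 : S 0 = 0) (hC0 : 0 < C 0) {T : ℝ}
    (hT : 0 < T) (hCT : C T = C 0) : ∃ τ, 0 < τ ∧ C τ = 0 ∧ ∀ t ∈ Ico 0 τ, 0 < C t := by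
  set Z := Icc 0 T ∩ C ⁻¹' Iic 0
  have hZ : Z.Nonempty := by
    by_contra hZ
    have hpos : ∀ t ∈ Ico 0 T, 0 < C t :=
      fun t ht => not_le.1 fun hle => hZ ⟨t, Ico_subset_Icc_self ht, hle⟩
    exact (h.strictAntiOn_Icc hS0 hpos ⟨le_rfl, hT.le⟩ ⟨hT.le, le_rfl⟩ hT).ne hCT
  obtain ⟨τ, ⟨⟨hτ_nonneg, hτT⟩, hCτ⟩, hleast⟩ :=
    (isCompact_Icc.inter_right (isClosed_Iic.preimage h.continuous)).exists_isLeast hZ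
  have hpos : ∀ t ∈ Ico 0 τ, 0 < C t :=
    fun t ht => not_le.1 fun hle => ht.2.not_ge (hleast ⟨⟨ht.1, ht.2.le.trans hτT⟩, hle⟩)
  obtain ⟨z, hz, hCz⟩ :=
    intermediate_value_Icc' hτ_nonneg h.continuous.continuousOn ⟨hCτ, hC0.le⟩
  obtain rfl : τ = z := le_antisymm (hleast ⟨⟨hz.1, hz.2.trans hτT⟩, hCz.le⟩) hz.2
  refine ⟨τ, hτ_nonneg.lt_of_ne ?_, hCz, hpos⟩
  rintro rfl
  exact hC0.ne' hCz

theorem apply_neg_of_mem_Ioo (h : IsPowOscSolution m C S) (hm : Odd m) (hS0 : S 0 = 0)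
    (hτ : C τ = 0) (hpos : ∀ t ∈ Ico 0 τ, 0 < C t) {t : ℝ} (ht : t ∈ Ioo τ (3 * τ)) :
    C t < 0 := by
  rcases le_total t (2 * τ) with ht₂ | ht₂
  · have hsymm := (h.antisymm_of_C_eq_zero hm hτ t).1
    have := hpos (2 * τ - t) ⟨by linarith, by linarith [ht.1]⟩
    linarith
  · have hanti := (h.antiperiodic hm hS0 hτ).1.sub_eq t
    have := hpos (t - 2 * τ) ⟨by linarith, by linarith [ht.2]⟩
    linarith

theorem apply_four_mul_sub (h : IsPowOscSolution m C S) (hm : Odd m) (hS0 : S 0 = 0)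
    (hτ : C τ = 0) (t : ℝ) : C (4 * τ - t) = C t := by
  rw [← h.even hS0 t, ← (h.antiperiodic hm hS0 hτ).1.periodic_two_mul (-t)]
  ring_nf

theorem apply_eq_zero_iff (h : IsPowOscSolution m C S) (hm : Odd m) (hS0 : S 0 = 0)
    (hτ : C τ = 0) (hpos : ∀ t ∈ Ico 0 τ, 0 < C t) {t : ℝ} (ht : t ∈ Ico 0 (4 * τ)) :
    C t = 0 ↔ t = τ ∨ t = 3 * τ := by
  refine ⟨fun hCt => ?_, ?_⟩
  · rcases lt_trichotomy t τ with ht₁ | rfl | ht₁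
    · exact absurd hCt (hpos t ⟨ht.1, ht₁⟩).ne'
    · exact .inl rfl
    rcases lt_trichotomy t (3 * τ) with ht₃ | rfl | ht₃
    · exact absurd hCt (h.apply_neg_of_mem_Ioo hm hS0 hτ hpos ⟨ht₁, ht₃⟩).ne
    · exact .inr rfl
    · have := hpos (4 * τ - t) ⟨by linarith [ht.2], by linarith⟩
      rw [h.apply_four_mul_sub hm hS0 hτ] at this
      exact absurd hCt this.ne'
  · rintro (rfl | rfl)
    · exact hτ
    · rw [show 3 * τ = τ + 2 * τ by ring, (h.antiperiodic hm hS0 hτ).1, hτ, neg_zero]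

theorem apply_lt_apply_zero (h : IsPowOscSolution m C S) (hm : Odd m) (hS0 : S 0 = 0)
    (hτ₀ : 0 < τ) (hτ : C τ = 0) (hpos : ∀ t ∈ Ico 0 τ, 0 < C t) {t : ℝ}
    (ht : t ∈ Ioo 0 (4 * τ)) : C t < C 0 := by
  have hanti := h.strictAntiOn_Icc hS0 hpos
  rcases le_or_gt t τ with ht₁ | ht₁
  · exact hanti ⟨le_rfl, hτ₀.le⟩ ⟨ht.1.le, ht₁⟩ ht.1
  rcases lt_or_ge t (3 * τ) with ht₃ | ht₃
  · linarith [h.apply_neg_of_mem_Ioo hm hS0 hτ hpos ⟨ht₁, ht₃⟩, hpos 0 ⟨le_rfl, hτ₀⟩]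
  · rw [← h.apply_four_mul_sub hm hS0 hτ]
    exact hanti ⟨le_rfl, hτ₀.le⟩ ⟨by linarith [ht.2], by linarith⟩ (by linarith [ht.2])

end IsPowOscSolution

theorem C_zeros_in_unit_interval_general
    (n : ℕ)
    (C S : ℝ → ℝ)
    (hC' : ∀ t, HasDerivAt C (S t) t)
    (hS' : ∀ t, HasDerivAt S (-(C t ^ (2 * n + 1))) t)
    (hC0 : C 0 = 1) (hS0 : S 0 = 0)
    (T₀ : ℝ) (hT₀pos : 0 < T₀)
    (hCper : Function.Periodic C T₀)
    (hT₀min : ∀ T : ℝ, 0 < T → Function.Periodic C T → Function.Periodic S T → T₀ ≤ T) :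
    ∃ ϑ₁ ϑ₂ : ℝ, ϑ₁ ∈ Set.Ico (0:ℝ) 1 ∧ ϑ₂ ∈ Set.Ico (0:ℝ) 1 ∧ ϑ₁ ≠ ϑ₂ ∧
      C (ϑ₁ * T₀) = 0 ∧ C (ϑ₂ * T₀) = 0 ∧
      (∀ ϑ ∈ Set.Ico (0:ℝ) 1, C (ϑ * T₀) = 0 → ϑ = ϑ₁ ∨ ϑ = ϑ₂) ∧
      |ϑ₁ - ϑ₂| = 1 / 2 := by
  have h : IsPowOscSolution (2 * n + 1) C S := fun t => ⟨hC' t, hS' t⟩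
  have hm : Odd (2 * n + 1) := odd_two_mul_add_one n
  have hCT₀ : C T₀ = C 0 := by simpa using hCper 0
  obtain ⟨τ, hτ₀, hτ, hpos⟩ := h.exists_first_zero hS0 (by simp [hC0]) hT₀pos hCT₀
  obtain ⟨hCanti, hSanti⟩ := h.antiperiodic hm hS0 hτ
  obtain rfl : T₀ = 4 * τ := by
    refine le_antisymm ?_ (not_lt.1 fun hlt => ?_)
    · rw [show 4 * τ = 2 * (2 * τ) by ring]
      exact hT₀min _ (by positivity) hCanti.periodic_two_mul hSanti.periodic_two_mul
    · exact (h.apply_lt_apply_zero hm hS0 hτ₀ hτ hpos ⟨hT₀pos, hlt⟩).ne hCT₀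
  have hzero {ϑ : ℝ} (hϑ : ϑ ∈ Ico (0 : ℝ) 1) :
      C (ϑ * (4 * τ)) = 0 ↔ ϑ = 1 / 4 ∨ ϑ = 3 / 4 := by
    rw [h.apply_eq_zero_iff hm hS0 hτ hpos ⟨by nlinarith [hϑ.1], by nlinarith [hϑ.2]⟩]
    constructor <;> rintro (hϑ' | hϑ') <;> [left; right; left; right] <;> nlinarith
  refine ⟨1 / 4, 3 / 4, by norm_num, by norm_num, by norm_num, ?_, ?_, ?_, by norm_num⟩
  · exact (hzero (by norm_num)).2 (.inl rfl)
  · exact (hzero (by norm_num)).2 (.inr rfl)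
  · exact fun ϑ hϑ => (hzero hϑ).1

/-- The equation `C(ϑ·T₀) = 0` has exactly two solutions `ϑ` in `[0, 1)`,
and these two solutions differ by exactly `1/2`. -/
theorem C_zeros_in_unit_interval
    (n : ℕ) (hn : 1 ≤ n)
    (C S : ℝ → ℝ)
    (hC' : ∀ t, HasDerivAt C (S t) t)
    (hS' : ∀ t, HasDerivAt S (-(C t ^ (2 * n + 1))) t)
    (hC0 : C 0 = 1) (hS0 : S 0 = 0)
    (T₀ : ℝ) (hT₀pos : 0 < T₀)
    (hCper : Function.Periodic C T₀) (hSper : Function.Periodic S T₀)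
    (hT₀min : ∀ T : ℝ, 0 < T → Function.Periodic C T → Function.Periodic S T → T₀ ≤ T) :
    ∃ ϑ₁ ϑ₂ : ℝ, ϑ₁ ∈ Set.Ico (0:ℝ) 1 ∧ ϑ₂ ∈ Set.Ico (0:ℝ) 1 ∧ ϑ₁ ≠ ϑ₂ ∧
      C (ϑ₁ * T₀) = 0 ∧ C (ϑ₂ * T₀) = 0 ∧
      (∀ ϑ ∈ Set.Ico (0:ℝ) 1, C (ϑ * T₀) = 0 → ϑ = ϑ₁ ∨ ϑ = ϑ₂) ∧
      |ϑ₁ - ϑ₂| = 1 / 2 :=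
  C_zeros_in_unit_interval_general n C S hC' hS' hC0 hS0 T₀ hT₀pos hCper hT₀min
end

section
/- The map Ψ₁(λ, ϑ) = ((aλ)^α · C(ϑ·T₀), (aλ)^β · S(ϑ·T₀)) is a bijection from (0, ∞) × [0, 1) onto ℝ² \ {(0, 0)}. -/
/-!
The energy `E(x, y) = (n + 1) y² + x^(2n+2)` is conserved, so `t ↦ (C t, S t)` runs on the level
curve `E = 1`, and it is weighted-homogeneous: `E(ρ^α x, ρ^β y) = ρ^(2β) E(x, y)` since
`(n + 1) α = β`. Hence `Ψ₁` is a bijection as soon as the orbit map is a bijection from `[0, T₀)`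
onto `{E = 1}`; the change of variables `(λ, ϑ) ↦ (aλ, ϑT₀)` is harmless.

A repeated point of the orbit in `[0, T₀)` would, by uniqueness of solutions (the vector field is
Lipschitz on the unit ball, which contains `{E ≤ 1}`), give a period shorter than `T₀`. For
surjectivity, `C` has a first positive zero `t₁` (otherwise `S` would decrease forever), and on
`[0, t₁]` `S` decreases from `0`, so the intermediate value theorem covers the quarter
`x ≥ 0, y ≤ 0` of the curve; the symmetries `(C, S)(2t₁ - t) = (-C, S)(t)` and
`(C, S)(t + 2t₁) = -(C, S)(t)` cover the rest.
-/

open Set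

lemma even_two_mul_add_two (n : ℕ) : Even (2 * n + 2) := ⟨n + 1, by ring⟩

lemma pos_of_forall_mem_Icc_ne_zero {f : ℝ → ℝ} (hf : Continuous f) (h0 : 0 < f 0) {t : ℝ}
    (ht : 0 ≤ t) (hne : ∀ s ∈ Icc 0 t, f s ≠ 0) : 0 < f t := by
  by_contra! hft
  obtain ⟨s, hs, hfs⟩ := intermediate_value_Icc' ht hf.continuousOn ⟨hft, h0.le⟩
  exact hne s hs hfs

lemma exists_first_pos_zero {f : ℝ → ℝ} (hf : Continuous f) (h0 : 0 < f 0) {z : ℝ} (hz : 0 < z)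
    (hfz : f z = 0) : ∃ t₁, 0 < t₁ ∧ f t₁ = 0 ∧ ∀ t ∈ Ico 0 t₁, 0 < f t := by
  set Z := Ici 0 ∩ f ⁻¹' {0}
  have hZ : IsClosed Z := isClosed_Ici.inter (isClosed_singleton.preimage hf)
  have hbdd : BddBelow Z := ⟨0, fun _ ht => ht.1⟩
  obtain ⟨hnonneg, hzero⟩ : sInf Z ∈ Z := hZ.csInf_mem ⟨z, hz.le, hfz⟩ hbdd
  refine ⟨sInf Z, lt_of_le_of_ne hnonneg fun h => ?_, hzero, fun t ht => ?_⟩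
  · rw [← h] at hzero; exact h0.ne' hzero
  · exact pos_of_forall_mem_Icc_ne_zero hf h0 ht.1 fun s hs hfs =>
      (csInf_le hbdd ⟨hs.1, hfs⟩).not_gt (hs.2.trans_lt ht.2)

namespace Oscillator

def energy (n : ℕ) (x y : ℝ) : ℝ := (n + 1) * y ^ 2 + x ^ (2 * n + 2)

def field (n : ℕ) (p : ℝ × ℝ) : ℝ × ℝ := (p.2, -(p.1 ^ (2 * n + 1)))

def IsSolution (n : ℕ) (C S : ℝ → ℝ) : Prop :=
  ∀ t, HasDerivAt C (S t) t ∧ HasDerivAt S (-(C t ^ (2 * n + 1))) t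

variable {n : ℕ}

lemma energy_neg_left (x y : ℝ) : energy n (-x) y = energy n x y := by
  simp only [energy, (even_two_mul_add_two n).neg_pow]

lemma energy_neg_neg (x y : ℝ) : energy n (-x) (-y) = energy n x y := by
  rw [energy_neg_left]; simp only [energy, neg_sq]

lemma energy_pos {x y : ℝ} (h : (x, y) ≠ (0, 0)) : 0 < energy n x y := by
  have hx : 0 ≤ x ^ (2 * n + 2) := (even_two_mul_add_two n).pow_nonneg x
  rcases eq_or_ne y 0 with rfl | hy
  · have hx0 : x ≠ 0 := fun hx0 => h (by rw [hx0])
    simpa [energy] using (even_two_mul_add_two n).pow_pos hx0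
  · unfold energy; positivity

lemma abs_le_one_of_energy_le_one {x y : ℝ} (h : energy n x y ≤ 1) :
    |x| ≤ 1 ∧ |y| ≤ 1 := by
  have hx : 0 ≤ x ^ (2 * n + 2) := (even_two_mul_add_two n).pow_nonneg x
  have hy : 0 ≤ (n : ℝ) * y ^ 2 := by positivity
  unfold energy at h
  constructor
  · rw [← pow_le_one_iff_of_nonneg (abs_nonneg x) (by omega : 2 * n + 2 ≠ 0),
      (even_two_mul_add_two n).pow_abs]
    nlinarith
  · rw [← sq_le_one_iff_abs_le_one]
    nlinarith

lemma energy_rpow_mul {α β ρ : ℝ} (hαβ : (n + 1) * α = β) (hρ : 0 ≤ ρ) (x y : ℝ) :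
    energy n (ρ ^ α * x) (ρ ^ β * y) = ρ ^ (2 * β) * energy n x y := by
  have hy : (ρ ^ β) ^ 2 = ρ ^ (2 * β) := by
    rw [← Real.rpow_natCast, ← Real.rpow_mul hρ]; ring_nf
  have hx : (ρ ^ α) ^ (2 * n + 2) = ρ ^ (2 * β) := by
    rw [← Real.rpow_natCast, ← Real.rpow_mul hρ, ← hαβ]; push_cast; ring_nf
  simp only [energy, mul_pow, hx, hy]
  ring

lemma lipschitzOnWith_field :
    LipschitzOnWith (2 * n + 2) (field n) (Metric.closedBall 0 1) := by
  refine LipschitzOnWith.of_dist_le_mul fun p hp q hq => ?_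
  rw [mem_closedBall_zero_iff, Prod.norm_def, max_le_iff] at hp hq
  have hpow : |p.1 ^ (2 * n + 1) - q.1 ^ (2 * n + 1)| ≤ (2 * n + 1) * |p.1 - q.1| := by
    calc |p.1 ^ (2 * n + 1) - q.1 ^ (2 * n + 1)|
        ≤ |p.1 - q.1| * (2 * n + 1 : ℕ) * max |p.1| |q.1| ^ (2 * n) := abs_pow_sub_pow_le ..
      _ ≤ |p.1 - q.1| * (2 * n + 1 : ℕ) * 1 := by
          gcongr; exact pow_le_one₀ (by positivity) (max_le hp.1 hq.1)
      _ = (2 * n + 1) * |p.1 - q.1| := by push_cast; ring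
  have h1 := le_max_left |p.1 - q.1| |p.2 - q.2|
  have h2 := le_max_right |p.1 - q.1| |p.2 - q.2|
  simp only [field, Prod.dist_eq, Real.dist_eq, neg_sub_neg, abs_sub_comm (q.1 ^ _)]
  push_cast
  refine max_le ?_ ?_ <;> nlinarith [abs_nonneg (p.1 - q.1)]

namespace IsSolution

variable {C S : ℝ → ℝ}

lemma continuous_left (h : IsSolution n C S) : Continuous C :=
  continuous_iff_continuousAt.2 fun t => (h t).1.continuousAt

lemma continuous_right (h : IsSolution n C S) : Continuous S :=
  continuous_iff_continuousAt.2 fun t => (h t).2.continuousAt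

lemma hasDerivAt_prod (h : IsSolution n C S) (t : ℝ) :
    HasDerivAt (fun t => (C t, S t)) (field n (C t, S t)) t :=
  (h t).1.prodMk (h t).2

lemma energy_eq (h : IsSolution n C S) (s t : ℝ) :
    energy n (C s) (S s) = energy n (C t) (S t) := by
  have hE : ∀ t, HasDerivAt (fun t => energy n (C t) (S t)) 0 t := fun t => by
    refine ((((h t).2.pow 2).const_mul ((n : ℝ) + 1)).add
      ((h t).1.pow (2 * n + 2))).congr_deriv ?_
    push_cast
    ring
  exact is_const_of_deriv_eq_zero (fun t => (hE t).differentiableAt) (fun t => (hE t).deriv) s t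

lemma comp_add_const (h : IsSolution n C S) (c : ℝ) :
    IsSolution n (fun t => C (t + c)) (fun t => S (t + c)) :=
  fun t => ⟨(h (t + c)).1.comp_add_const t c, (h (t + c)).2.comp_add_const t c⟩

lemma neg_comp_const_sub (h : IsSolution n C S) (c : ℝ) :
    IsSolution n (fun t => -C (c - t)) (fun t => S (c - t)) :=
  fun t => ⟨((h (c - t)).1.comp_const_sub c t).neg.congr_deriv (neg_neg _),
    ((h (c - t)).2.comp_const_sub c t).congr_deriv (by
      rw [(odd_two_mul_add_one n).neg_pow, neg_neg])⟩

lemma neg (h : IsSolution n C S) : IsSolution n (fun t => -C t) (fun t => -S t) :=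
  fun t => ⟨(h t).1.neg, (h t).2.neg.congr_deriv
    (by rw [(odd_two_mul_add_one n).neg_pow])⟩

lemma eq_of_eq_at (h : IsSolution n C S) {C' S' : ℝ → ℝ} (h' : IsSolution n C' S') {t₀ : ℝ}
    (hE : energy n (C t₀) (S t₀) ≤ 1) (hC : C t₀ = C' t₀) (hS : S t₀ = S' t₀) :
    C = C' ∧ S = S' := by
  have hE' : energy n (C' t₀) (S' t₀) ≤ 1 := hC ▸ hS ▸ hE
  have mem_ball {C S : ℝ → ℝ} (h : IsSolution n C S) (hE : energy n (C t₀) (S t₀) ≤ 1)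
      (t : ℝ) :
      (C t, S t) ∈ Metric.closedBall (0 : ℝ × ℝ) 1 := by
    have := abs_le_one_of_energy_le_one ((h.energy_eq t t₀).trans_le hE)
    rw [mem_closedBall_zero_iff, Prod.norm_def]
    exact max_le this.1 this.2
  have := ODE_solution_unique_univ (v := fun _ => field n)
    (s := fun _ => Metric.closedBall 0 1)
    (fun _ => lipschitzOnWith_field) (fun t => ⟨h.hasDerivAt_prod t, mem_ball h hE t⟩)
    (fun t => ⟨h'.hasDerivAt_prod t, mem_ball h' hE' t⟩) (Prod.ext hC hS)
  exact ⟨funext fun t => congrArg Prod.fst (congrFun this t),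
    funext fun t => congrArg Prod.snd (congrFun this t)⟩

lemma periodic_of_eq (h : IsSolution n C S) {t₁ t₂ : ℝ} (hE : energy n (C t₁) (S t₁) ≤ 1)
    (hC : C t₁ = C t₂) (hS : S t₁ = S t₂) :
    Function.Periodic C (t₂ - t₁) ∧ Function.Periodic S (t₂ - t₁) := by
  obtain ⟨hC', hS'⟩ := h.eq_of_eq_at (h.comp_add_const (t₂ - t₁)) hE
    (by rwa [add_sub_cancel]) (by rwa [add_sub_cancel])
  exact ⟨fun t => (congrFun hC' t).symm, fun t => (congrFun hS' t).symm⟩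

lemma energy_eq_one (h : IsSolution n C S) (hC0 : C 0 = 1) (hS0 : S 0 = 0) (t : ℝ) :
    energy n (C t) (S t) = 1 := by
  rw [h.energy_eq t 0, hC0, hS0]
  simp [energy]

lemma exists_pos_zero (h : IsSolution n C S) (hC0 : 0 < C 0) {T : ℝ} (hT : 0 < T)
    (hS : Function.Periodic S T) : ∃ t, 0 < t ∧ C t = 0 := by
  by_contra! hne
  have hpos : ∀ t, 0 < t → 0 < C t := fun t ht =>
    pos_of_forall_mem_Icc_ne_zero h.continuous_left hC0 ht.le fun s hs =>
      (eq_or_lt_of_le hs.1).elim (fun hs0 => hs0 ▸ hC0.ne') (hne s)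
  have hanti : StrictAntiOn S (Icc 0 T) := by
    refine strictAntiOn_of_deriv_neg (convex_Icc 0 T) h.continuous_right.continuousOn
      fun t ht => ?_
    rw [interior_Icc] at ht
    rw [(h t).2.deriv, neg_lt_zero]
    exact pow_pos (hpos t ht.1) _
  have := hanti ⟨le_rfl, hT.le⟩ ⟨hT.le, le_rfl⟩ hT
  rw [← zero_add T, hS 0] at this
  exact this.false

lemma exists_eq_of_nonneg_of_nonpos (h : IsSolution n C S) (hC0 : C 0 = 1) (hS0 : S 0 = 0)
    {t₁ : ℝ} (ht₁ : 0 < t₁) (hCt₁ : C t₁ = 0) (hpos : ∀ t ∈ Ico 0 t₁, 0 < C t) {x y : ℝ}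
    (hx : 0 ≤ x) (hy : y ≤ 0) (hE : energy n x y = 1) : ∃ t, C t = x ∧ S t = y := by
  have hS_anti : AntitoneOn S (Icc 0 t₁) := by
    refine antitoneOn_of_deriv_nonpos (convex_Icc 0 t₁) h.continuous_right.continuousOn
      (fun t _ => (h t).2.differentiableAt.differentiableWithinAt) fun t ht => ?_
    rw [interior_Icc] at ht
    rw [(h t).2.deriv, neg_nonpos]
    exact (pow_pos (hpos t ⟨ht.1.le, ht.2⟩) _).le
  have hx1 : x ≤ 1 := (le_abs_self x).trans (abs_le_one_of_energy_le_one hE.le).1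
  obtain ⟨t, ht, hCt⟩ := intermediate_value_Icc' ht₁.le h.continuous_left.continuousOn
    (show x ∈ Icc (C t₁) (C 0) by rw [hCt₁, hC0]; exact ⟨hx, hx1⟩)
  have hSt : S t ≤ 0 := hS0 ▸ hS_anti ⟨le_rfl, ht₁.le⟩ ht ht.1
  have hsq : S t ^ 2 = y ^ 2 := by
    have := h.energy_eq_one hC0 hS0 t
    rw [hCt, ← hE] at this
    exact mul_left_cancel₀ (by positivity) (add_right_cancel this)
  refine ⟨t, hCt, ?_⟩
  nlinarith

lemma reflect (h : IsSolution n C S) {t₁ : ℝ} (hE : energy n (C t₁) (S t₁) ≤ 1)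
    (hCt₁ : C t₁ = 0) (t : ℝ) : C (2 * t₁ - t) = -C t ∧ S (2 * t₁ - t) = S t := by
  obtain ⟨hC, hS⟩ := h.eq_of_eq_at (h.neg_comp_const_sub (2 * t₁)) hE
    (by rw [two_mul, add_sub_cancel_right, hCt₁, neg_zero])
    (by rw [two_mul, add_sub_cancel_right])
  exact ⟨by rw [congrFun hC t, neg_neg], (congrFun hS t).symm⟩

lemma antipodal (h : IsSolution n C S) (hC0 : C 0 = 1) (hS0 : S 0 = 0) {t₁ : ℝ}
    (hCt₁ : C t₁ = 0) (t : ℝ) : C (t + 2 * t₁) = -C t ∧ S (t + 2 * t₁) = -S t := by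
  have hrefl := h.reflect (h.energy_eq_one hC0 hS0 t₁).le hCt₁ 0
  rw [sub_zero] at hrefl
  obtain ⟨hC, hS⟩ := h.eq_of_eq_at (h.comp_add_const (2 * t₁)).neg
    (h.energy_eq_one hC0 hS0 0).le
    (by rw [zero_add, hrefl.1, neg_neg]) (by rw [zero_add, hrefl.2, hS0, neg_zero])
  exact ⟨by rw [congrFun hC t, neg_neg], by rw [congrFun hS t, neg_neg]⟩

lemma exists_eq_of_energy_eq_one (h : IsSolution n C S) (hC0 : C 0 = 1) (hS0 : S 0 = 0)
    {T : ℝ} (hT : 0 < T) (hS : Function.Periodic S T) {x y : ℝ} (hE : energy n x y = 1) :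
    ∃ t, C t = x ∧ S t = y := by
  obtain ⟨z, hz, hCz⟩ := h.exists_pos_zero (hC0 ▸ one_pos) hT hS
  obtain ⟨t₁, ht₁, hCt₁, hpos⟩ :=
    exists_first_pos_zero h.continuous_left (hC0 ▸ one_pos) hz hCz
  have lower_half : ∀ {x y : ℝ}, y ≤ 0 → energy n x y = 1 → ∃ t, C t = x ∧ S t = y := by
    intro x y hy hE
    rcases le_or_gt 0 x with hx | hx
    · exact h.exists_eq_of_nonneg_of_nonpos hC0 hS0 ht₁ hCt₁ hpos hx hy hE
    · obtain ⟨t, hCt, hSt⟩ := h.exists_eq_of_nonneg_of_nonpos hC0 hS0 ht₁ hCt₁ hpos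
        (neg_nonneg.2 hx.le) hy (by rwa [energy_neg_left])
      have := h.reflect (h.energy_eq_one hC0 hS0 t₁).le hCt₁ t
      exact ⟨2 * t₁ - t, by rw [this.1, hCt, neg_neg], by rw [this.2, hSt]⟩
  rcases le_or_gt y 0 with hy | hy
  · exact lower_half hy hE
  · obtain ⟨t, hCt, hSt⟩ :=
      lower_half (x := -x) (neg_nonpos.2 hy.le) (by rwa [energy_neg_neg])
    have := h.antipodal hC0 hS0 hCt₁ t
    exact ⟨t + 2 * t₁, by rw [this.1, hCt, neg_neg], by rw [this.2, hSt, neg_neg]⟩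

end IsSolution

theorem bijOn_Ico_energy_level {C S : ℝ → ℝ} (h : IsSolution n C S) (hC0 : C 0 = 1)
    (hS0 : S 0 = 0) {T₀ : ℝ} (hT₀ : 0 < T₀) (hC : Function.Periodic C T₀)
    (hS : Function.Periodic S T₀)
    (hmin : ∀ T, 0 < T → Function.Periodic C T → Function.Periodic S T → T₀ ≤ T) :
    BijOn (fun t => (C t, S t)) (Ico 0 T₀) {p | energy n p.1 p.2 = 1} := by
  refine ⟨fun t _ => h.energy_eq_one hC0 hS0 t, fun t₁ ht₁ t₂ ht₂ heq => ?_, fun p hp => ?_⟩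
  · have no_period_lt {t₁ t₂ : ℝ} (ht₁ : t₁ ∈ Ico 0 T₀) (ht₂ : t₂ ∈ Ico 0 T₀) (hlt : t₁ < t₂)
        (heq : (C t₁, S t₁) = (C t₂, S t₂)) : False := by
      obtain ⟨hCp, hSp⟩ := h.periodic_of_eq (h.energy_eq_one hC0 hS0 t₁).le
        (congrArg Prod.fst heq) (congrArg Prod.snd heq)
      have := hmin _ (sub_pos.2 hlt) hCp hSp
      linarith [ht₁.1, ht₂.2]
    rcases lt_trichotomy t₁ t₂ with hlt | heq' | hgt
    · exact (no_period_lt ht₁ ht₂ hlt heq).elim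
    · exact heq'
    · exact (no_period_lt ht₂ ht₁ hgt heq.symm).elim
  · obtain ⟨t, hCt, hSt⟩ := h.exists_eq_of_energy_eq_one hC0 hS0 hT₀ hS hp
    have hper : Function.Periodic (fun t => (C t, S t)) T₀ := fun t => Prod.ext (hC t) (hS t)
    obtain ⟨t', ht', heq⟩ := hper.exists_mem_Ico₀ hT₀ t
    exact ⟨t', ht', heq.symm.trans (Prod.ext hCt hSt)⟩

theorem bijOn_rpow_mul_of_bijOn_energy_level {C S : ℝ → ℝ} {I : Set ℝ} {α β : ℝ}
    (hαβ : (n + 1) * α = β) (hβ : 0 < β)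
    (hI : BijOn (fun t => (C t, S t)) I {p | energy n p.1 p.2 = 1}) :
    BijOn (fun q : ℝ × ℝ => (q.1 ^ α * C q.2, q.1 ^ β * S q.2)) (Ioi 0 ×ˢ I) {(0, 0)}ᶜ := by
  have henergy {ρ t : ℝ} (hρ : 0 < ρ) (ht : t ∈ I) :
      energy n (ρ ^ α * C t) (ρ ^ β * S t) = ρ ^ (2 * β) := by
    rw [energy_rpow_mul hαβ hρ.le, show energy n (C t) (S t) = 1 from hI.mapsTo ht, mul_one]
  refine ⟨?_, ?_, ?_⟩
  · rintro ⟨ρ, t⟩ ⟨hρ, ht⟩ h0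
    obtain ⟨hx, hy⟩ := Prod.mk.inj h0
    have := henergy hρ ht
    rw [hx, hy, show energy n 0 0 = 0 by simp [energy]] at this
    exact (Real.rpow_pos_of_pos hρ _).ne' this.symm
  · rintro ⟨ρ₁, t₁⟩ ⟨hρ₁, ht₁⟩ ⟨ρ₂, t₂⟩ ⟨hρ₂, ht₂⟩ heq
    obtain ⟨hx, hy⟩ := Prod.mk.inj heq
    obtain rfl : ρ₁ = ρ₂ := (Real.rpow_left_inj hρ₁.le hρ₂.le (by positivity : 2 * β ≠ 0)).1
      (by rw [← henergy hρ₁ ht₁, ← henergy hρ₂ ht₂, hx, hy])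
    have hC := mul_left_cancel₀ (Real.rpow_pos_of_pos hρ₁ α).ne' hx
    have hS := mul_left_cancel₀ (Real.rpow_pos_of_pos hρ₁ β).ne' hy
    exact Prod.ext rfl (hI.injOn ht₁ ht₂ (Prod.ext hC hS))
  · rintro ⟨x, y⟩ hxy
    have hE := energy_pos (n := n) hxy
    set ρ := energy n x y ^ (2 * β)⁻¹
    have hρ : 0 < ρ := Real.rpow_pos_of_pos hE _
    have hunit : energy n ((ρ ^ α)⁻¹ * x) ((ρ ^ β)⁻¹ * y) = 1 := by
      rw [← Real.inv_rpow hρ.le, ← Real.inv_rpow hρ.le, energy_rpow_mul hαβ (inv_nonneg.2 hρ.le),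
        Real.inv_rpow hρ.le, Real.rpow_inv_rpow hE.le (by positivity), inv_mul_cancel₀ hE.ne']
    obtain ⟨t, ht, heq⟩ := hI.surjOn (a := ((ρ ^ α)⁻¹ * x, (ρ ^ β)⁻¹ * y)) hunit
    obtain ⟨hC, hS⟩ := Prod.mk.inj heq
    refine ⟨(ρ, t), ⟨hρ, ht⟩, ?_⟩
    simp only [hC, hS, mul_inv_cancel_left₀ (Real.rpow_pos_of_pos hρ _).ne']

end Oscillator

open Oscillator in
theorem Psi1_bijective_general
    (n : ℕ)
    (C S : ℝ → ℝ)
    (hC' : ∀ t, HasDerivAt C (S t) t)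
    (hS' : ∀ t, HasDerivAt S (-(C t ^ (2 * n + 1))) t)
    (hC0 : C 0 = 1) (hS0 : S 0 = 0)
    (T₀ : ℝ) (hT₀pos : 0 < T₀)
    (hCper : Function.Periodic C T₀) (hSper : Function.Periodic S T₀)
    (hT₀min : ∀ T : ℝ, 0 < T → Function.Periodic C T → Function.Periodic S T → T₀ ≤ T)
    (α β a : ℝ)
    (hα : α = 1 / (n + 2)) (hβ : β = (n + 1) / (n + 2))
    (ha : a = T₀ / α) :
    Set.BijOn
      (fun q : ℝ × ℝ => ((a * q.1) ^ α * C (q.2 * T₀), (a * q.1) ^ β * S (q.2 * T₀)))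
      (Set.Ioi (0:ℝ) ×ˢ Set.Ico (0:ℝ) 1)
      ({((0:ℝ), (0:ℝ))}ᶜ) := by
  have hαβ : ((n : ℝ) + 1) * α = β := by rw [hα, hβ, mul_one_div]
  have hβ_pos : 0 < β := by rw [hβ]; positivity
  have ha_pos : 0 < a := by rw [ha, hα]; positivity
  have hscale : BijOn (fun q : ℝ × ℝ => (a * q.1, q.2 * T₀))
      (Ioi 0 ×ˢ Ico 0 1) (Ioi 0 ×ˢ Ico 0 T₀) := by
    have h₁ := (mul_right_injective₀ ha_pos.ne').injOn.bijOn_image (s := Ioi 0)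
    have h₂ := (mul_left_injective₀ hT₀pos.ne').injOn.bijOn_image (s := Ico 0 1)
    rw [image_mul_left_Ioi ha_pos, mul_zero] at h₁
    rw [image_mul_right_Ico _ _ hT₀pos, zero_mul, one_mul] at h₂
    exact h₁.prodMap h₂
  have horbit :=
    bijOn_Ico_energy_level (fun t => ⟨hC' t, hS' t⟩) hC0 hS0 hT₀pos hCper hSper hT₀min
  exact (bijOn_rpow_mul_of_bijOn_energy_level hαβ hβ_pos horbit).comp hscale

/-- The map `Ψ₁(λ, ϑ) = ((aλ)^α · C(ϑ·T₀), (aλ)^β · S(ϑ·T₀))` is a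
bijection from `(0, ∞) × [0, 1)` onto `ℝ² \ {(0, 0)}`. -/
theorem Psi1_bijective
    (n : ℕ) (hn : 1 ≤ n)
    (C S : ℝ → ℝ)
    (hC' : ∀ t, HasDerivAt C (S t) t)
    (hS' : ∀ t, HasDerivAt S (-(C t ^ (2 * n + 1))) t)
    (hC0 : C 0 = 1) (hS0 : S 0 = 0)
    (T₀ : ℝ) (hT₀pos : 0 < T₀)
    (hCper : Function.Periodic C T₀) (hSper : Function.Periodic S T₀)
    (hT₀min : ∀ T : ℝ, 0 < T → Function.Periodic C T → Function.Periodic S T → T₀ ≤ T)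
    (α β a d : ℝ)
    (hα : α = 1 / (n + 2)) (hβ : β = (n + 1) / (n + 2))
    (ha : a = T₀ / α) (hd : d = (2 * a) ^ (2 * β) / (2 * n + 2)) :
    Set.BijOn
      (fun q : ℝ × ℝ => ((a * q.1) ^ α * C (q.2 * T₀), (a * q.1) ^ β * S (q.2 * T₀)))
      (Set.Ioi (0:ℝ) ×ˢ Set.Ico (0:ℝ) 1)
      ({((0:ℝ), (0:ℝ))}ᶜ) :=
  Psi1_bijective_general n C S hC' hS' hC0 hS0 T₀ hT₀pos hCper hSper hT₀min α β a hα hβ ha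
end

section
/- The map Ψ₁(λ, ϑ) = ((aλ)^α · C(ϑ·T₀), (aλ)^β · S(ϑ·T₀)), viewed as a map from (0, ∞) × ℝ to ℝ², has Jacobian determinant identically equal to the constant −a·α·T₀ = −T₀²; that is, ∂_λ x · ∂_ϑ y − ∂_ϑ x · ∂_λ y = −T₀² at every point (λ, ϑ) ∈ (0, ∞) × ℝ, where (x, y) = Ψ₁(λ, ϑ). -/
/-!
Differentiating `Ψ₁` and using `α + β = 1`, the powers of `aλ` cancel and the Jacobian becomes
`a T₀ (α C S' − β S C') = −a T₀ (α C^{2n+2} + β S²)` evaluated at `ϑ T₀`. Since `β = (n + 1) α`,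
this is `−a α T₀` times the energy `C^{2n+2} + (n + 1) S²`, which is conserved and equals `1`.
-/

open Real

theorem oscillator_energy_eq (n : ℕ) {C S : ℝ → ℝ}
    (hC' : ∀ t, HasDerivAt C (S t) t) (hS' : ∀ t, HasDerivAt S (-(C t ^ (2 * n + 1))) t)
    (t : ℝ) :
    (n + 1 : ℝ) * S t ^ 2 + C t ^ (2 * n + 2) = (n + 1 : ℝ) * S 0 ^ 2 + C 0 ^ (2 * n + 2) := by
  have hE : ∀ s, HasDerivAt (fun u => (n + 1 : ℝ) * S u ^ 2 + C u ^ (2 * n + 2)) 0 s := by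
    intro s
    refine ((((hS' s).fun_pow 2).const_mul ((n : ℝ) + 1)).fun_add
      ((hC' s).fun_pow (2 * n + 2))).congr_deriv ?_
    rw [show 2 * n + 2 - 1 = 2 * n + 1 by omega]
    push_cast
    ring
  exact is_const_of_deriv_eq_zero (fun s => (hE s).differentiableAt) (fun s => (hE s).deriv) t 0

theorem rpow_sub_one_mul_rpow_of_add_eq_one {x α β : ℝ} (hx : 0 < x) (hαβ : α + β = 1) :
    x ^ (α - 1) * x ^ β = 1 := by
  rw [← rpow_add hx, show α - 1 + β = 0 by linarith, rpow_zero]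

theorem hasDerivAt_const_mul_rpow {a l p : ℝ} (h : a * l ≠ 0) :
    HasDerivAt (fun l => (a * l) ^ p) (a * p * (a * l) ^ (p - 1)) l :=
  (hasDerivAt_const_mul a).rpow_const (Or.inl h)

theorem jacobian_rpow_mul_comp_mul_const {C S : ℝ → ℝ} {c s a T lam ϑ α β : ℝ}
    (hC : HasDerivAt C c (ϑ * T)) (hS : HasDerivAt S s (ϑ * T))
    (hlam : 0 < a * lam) (hαβ : α + β = 1) :
    deriv (fun l : ℝ => (a * l) ^ α * C (ϑ * T)) lam *
        deriv (fun θ : ℝ => (a * lam) ^ β * S (θ * T)) ϑ -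
      deriv (fun θ : ℝ => (a * lam) ^ α * C (θ * T)) ϑ *
        deriv (fun l : ℝ => (a * l) ^ β * S (ϑ * T)) lam
      = a * T * (α * C (ϑ * T) * s - β * S (ϑ * T) * c) := by
  have hCθ : HasDerivAt (fun θ => C (θ * T)) (c * T) ϑ := hC.comp ϑ (hasDerivAt_mul_const T)
  have hSθ : HasDerivAt (fun θ => S (θ * T)) (s * T) ϑ := hS.comp ϑ (hasDerivAt_mul_const T)
  rw [((hasDerivAt_const_mul_rpow hlam.ne').mul_const _).deriv, (hSθ.const_mul _).deriv,
    (hCθ.const_mul _).deriv,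
    ((hasDerivAt_const_mul_rpow hlam.ne').mul_const _).deriv]
  have hα := rpow_sub_one_mul_rpow_of_add_eq_one hlam hαβ
  have hβ := rpow_sub_one_mul_rpow_of_add_eq_one hlam ((add_comm β α).trans hαβ)
  linear_combination (a * T * α * C (ϑ * T) * s) * hα - (a * T * β * S (ϑ * T) * c) * hβ

theorem Psi1_jacobian_general
    (n : ℕ)
    (C S : ℝ → ℝ)
    (hC' : ∀ t, HasDerivAt C (S t) t)
    (hS' : ∀ t, HasDerivAt S (-(C t ^ (2 * n + 1))) t)
    (hC0 : C 0 = 1) (hS0 : S 0 = 0)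
    (T₀ : ℝ) (hT₀pos : 0 < T₀)
    (α β a : ℝ)
    (hα : α = 1 / (n + 2)) (hβ : β = (n + 1) / (n + 2))
    (ha : a = T₀ / α) :
    ∀ lam : ℝ, 0 < lam → ∀ ϑ : ℝ,
      deriv (fun l : ℝ => (a * l) ^ α * C (ϑ * T₀)) lam *
          deriv (fun θ : ℝ => (a * lam) ^ β * S (θ * T₀)) ϑ -
        deriv (fun θ : ℝ => (a * lam) ^ α * C (θ * T₀)) ϑ *
          deriv (fun l : ℝ => (a * l) ^ β * S (ϑ * T₀)) lam
        = -(a * α * T₀) ∧ -(a * α * T₀) = -(T₀ ^ 2) := by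
  intro lam hlam ϑ
  have hαpos : 0 < α := by rw [hα]; positivity
  have hαβ : α + β = 1 := by rw [hα, hβ]; field_simp; ring
  have hβα : β = (n + 1) * α := by rw [hα, hβ]; field_simp
  have hlam' : 0 < a * lam := by rw [ha]; positivity
  have henergy := oscillator_energy_eq n hC' hS' (ϑ * T₀)
  rw [hC0, hS0] at henergy
  refine ⟨?_, by rw [ha]; field_simp⟩
  rw [jacobian_rpow_mul_comp_mul_const (hC' _) (hS' _) hlam' hαβ, hβα]
  linear_combination (-(a * α * T₀)) * henergy

/-- The map `Ψ₁(λ, ϑ) = ((aλ)^α · C(ϑ·T₀), (aλ)^β · S(ϑ·T₀))`, viewed as a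
map from `(0, ∞) × ℝ` to `ℝ²`, has Jacobian determinant identically equal to the
constant `-a·α·T₀ = -T₀²`: at every point `(λ, ϑ) ∈ (0, ∞) × ℝ`,
`∂_λ x · ∂_ϑ y − ∂_ϑ x · ∂_λ y = -a·α·T₀ = -T₀²`, where `(x, y) = Ψ₁(λ, ϑ)`. -/
theorem Psi1_jacobian
    (n : ℕ) (hn : 1 ≤ n)
    (C S : ℝ → ℝ)
    (hC' : ∀ t, HasDerivAt C (S t) t)
    (hS' : ∀ t, HasDerivAt S (-(C t ^ (2 * n + 1))) t)
    (hC0 : C 0 = 1) (hS0 : S 0 = 0)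
    (T₀ : ℝ) (hT₀pos : 0 < T₀)
    (hCper : Function.Periodic C T₀) (hSper : Function.Periodic S T₀)
    (hT₀min : ∀ T : ℝ, 0 < T → Function.Periodic C T → Function.Periodic S T → T₀ ≤ T)
    (α β a d : ℝ)
    (hα : α = 1 / (n + 2)) (hβ : β = (n + 1) / (n + 2))
    (ha : a = T₀ / α) (hd : d = (2 * a) ^ (2 * β) / (2 * n + 2)) :
    ∀ lam : ℝ, 0 < lam → ∀ ϑ : ℝ,
      deriv (fun l : ℝ => (a * l) ^ α * C (ϑ * T₀)) lam *
          deriv (fun θ : ℝ => (a * lam) ^ β * S (θ * T₀)) ϑ -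
        deriv (fun θ : ℝ => (a * lam) ^ α * C (θ * T₀)) ϑ *
          deriv (fun l : ℝ => (a * l) ^ β * S (ϑ * T₀)) lam
        = -(a * α * T₀) ∧ -(a * α * T₀) = -(T₀ ^ 2) :=
  Psi1_jacobian_general n C S hC' hS' hC0 hS0 T₀ hT₀pos α β a hα hβ ha
end

section
/- There exist ρ₀ ≥ 1 and I₀ > 0 such that for every I ≥ I₀ and every θ, τ ∈ ℝ there is a unique ρ ≥ ρ₀ with H₃(ρ, τ, θ) = I; moreover, writing ρ = d^{−1/(2β)}·I^{1/(2β)} − R(I, θ, τ), for each fixed τ the function (I, θ) ↦ R(I, θ, τ) is C⁵ on [I₀, ∞) × ℝ. -/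
/-!
Write `H₃(ρ, τ, θ) = d ρ^(2β) + ∑ cᵢ(τ, θ) ρ^(α(i+1))`. The coefficients `cᵢ` are bounded
uniformly in `(τ, θ)`, because `pᵢ` is continuous and `1`-periodic and `C` is only evaluated on
the compact interval `[0, T₀/2]`; and every exponent satisfies `α(i+1) ≤ 2β - α`. Hence for
`ρ ≥ ρ₀` large the leading term `d ρ^(2β)` dominates both `H₃` and `∂_ρ H₃`: the map `ρ ↦ H₃` is
strictly increasing on `[ρ₀, ∞)` and tends to `∞`, so every large `I` has exactly one preimage
`ρ(I, θ, τ) > ρ₀`. As `∂_ρ H₃ ≠ 0` there, the implicit function theorem makes `(I, θ) ↦ ρ`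
of class `C⁵`, and so is `R = d^(-1/(2β)) I^(1/(2β)) - ρ`.
-/

open Set Filter Topology Finset Function

theorem contDiffAt_of_isolated_root {E : Type*} [NormedAddCommGroup E] [NormedSpace ℝ E]
    [CompleteSpace E] {n : WithTop ℕ∞} {G : ℝ × E → ℝ} {r : ℝ × E → ℝ} {z : ℝ × E}
    {U : Set ℝ} {P : ℝ} (hG : ContDiffAt ℝ n G (r z, z.2)) (hn : n ≠ 0)
    (hP : HasDerivAt (fun ρ => G (ρ, z.2)) P (r z)) (hP0 : P ≠ 0)
    (hrz : G (r z, z.2) = z.1) (hU : U ∈ 𝓝 (r z))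
    (huniq : ∀ᶠ y in 𝓝 z, ∀ ρ ∈ U, G (ρ, y.2) = y.1 → ρ = r y) :
    ContDiffAt ℝ n r z := by
  -- The local implicit function `ψ` of `f (y, ρ) = 0` agrees with `r` near `z` by uniqueness in `U`.
  set f : (ℝ × E) × ℝ → ℝ := fun v => G (v.2, v.1.2) - v.1.1
  have hf : ContDiffAt ℝ n f (z, r z) :=
    (hG.comp (z, r z) (contDiffAt_snd.prodMk (contDiffAt_snd.comp _ contDiffAt_fst))).sub
      (contDiffAt_fst.comp _ contDiffAt_fst)
  have hpartial : (fderiv ℝ f (z, r z) ∘L .inr ℝ (ℝ × E) ℝ) 1 = P := by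
    have h := (hf.differentiableAt hn).hasFDerivAt.comp_hasDerivAt (r z)
      ((hasDerivAt_const (r z) z).prodMk (hasDerivAt_id (r z)))
    exact h.unique (hP.sub_const z.1)
  have hinv : (fderiv ℝ f (z, r z) ∘L .inr ℝ (ℝ × E) ℝ).IsInvertible :=
    ⟨ContinuousLinearEquiv.unitsEquivAut ℝ (Units.mk0 P hP0),
      ContinuousLinearMap.ext_ring (by simp [hpartial])⟩
  set ψ := hf.implicitFunction hn hinv
  have hψz : ψ z = r z := hf.implicitFunction_apply_self hn hinv
  have hψ : ContDiffAt ℝ n ψ z := hf.contDiffAt_implicitFunction hn hinv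
  have hψU : ∀ᶠ y in 𝓝 z, ψ y ∈ U := hψ.continuousAt.tendsto (hψz ▸ hU)
  refine hψ.congr_of_eventuallyEq ?_
  filter_upwards [hf.eventually_apply_implicitFunction hn hinv, hψU, huniq] with y hy hyU hyu
  refine (hyu _ hyU ?_).symm
  simpa [f, hrz, sub_eq_zero] using hy

section PowerSum

variable {ι : Type*} (s : Finset ι) (d b : ℝ) (c e : ι → ℝ)

noncomputable def powerSum (ρ : ℝ) : ℝ := d * ρ ^ b + ∑ i ∈ s, c i * ρ ^ e i

variable {s d b c e} {γ Q ρ ρ₀ : ℝ}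

theorem abs_sum_mul_rpow_le {t : ℝ} (hρ : 1 ≤ ρ) (hc : ∀ i ∈ s, |c i| ≤ Q)
    (he : ∀ i ∈ s, e i ≤ t) : |∑ i ∈ s, c i * ρ ^ e i| ≤ #s * Q * ρ ^ t := by
  have hterm : ∀ i ∈ s, |c i * ρ ^ e i| ≤ Q * ρ ^ t := fun i hi => by
    rw [abs_mul, abs_of_pos (Real.rpow_pos_of_pos (by linarith) _)]
    exact mul_le_mul (hc i hi) (Real.rpow_le_rpow_of_exponent_le hρ (he i hi)) (by positivity)
      ((abs_nonneg _).trans (hc i hi))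
  calc |∑ i ∈ s, c i * ρ ^ e i| ≤ ∑ i ∈ s, |c i * ρ ^ e i| := abs_sum_le_sum_abs _ _
    _ ≤ #s • (Q * ρ ^ t) := sum_le_card_nsmul _ _ _ hterm
    _ = #s * Q * ρ ^ t := by rw [nsmul_eq_mul, mul_assoc]

theorem hasDerivAt_powerSum (hρ : 0 < ρ) :
    HasDerivAt (powerSum s d b c e)
      (powerSum s (d * b) (b - 1) (fun i => c i * e i) (fun i => e i - 1) ρ) ρ := by
  rw [powerSum]
  simp only [mul_assoc]
  exact ((Real.hasDerivAt_rpow_const (Or.inl hρ.ne')).const_mul d).fun_add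
    (HasDerivAt.fun_sum fun i _ => (Real.hasDerivAt_rpow_const (Or.inl hρ.ne')).const_mul (c i))

theorem continuousOn_powerSum : ContinuousOn (powerSum s d b c e) (Ioi 0) :=
  fun _ hρ => (hasDerivAt_powerSum hρ).continuousAt.continuousWithinAt

theorem rpow_mul_sub_le_powerSum (hρ : 1 ≤ ρ) (hc : ∀ i ∈ s, |c i| ≤ Q)
    (he : ∀ i ∈ s, e i ≤ b - γ) : ρ ^ (b - γ) * (d * ρ ^ γ - #s * Q) ≤ powerSum s d b c e ρ := by
  have hsplit : ρ ^ b = ρ ^ (b - γ) * ρ ^ γ := by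
    rw [← Real.rpow_add (by linarith), sub_add_cancel]
  have hneg := neg_abs_le (∑ i ∈ s, c i * ρ ^ e i)
  have habs := abs_sum_mul_rpow_le hρ hc he
  rw [powerSum, hsplit]
  linarith

theorem powerSum_le_mul_rpow (hρ : 1 ≤ ρ) (hc : ∀ i ∈ s, |c i| ≤ Q) (he : ∀ i ∈ s, e i ≤ b) :
    powerSum s d b c e ρ ≤ (d + #s * Q) * ρ ^ b := by
  have hle := le_abs_self (∑ i ∈ s, c i * ρ ^ e i)
  have habs := abs_sum_mul_rpow_le hρ hc he
  rw [powerSum]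
  linarith

theorem powerSum_deriv_pos (hb : 0 < b) (hγ : 0 ≤ γ) (hc : ∀ i ∈ s, |c i| ≤ Q)
    (he₀ : ∀ i ∈ s, 0 ≤ e i) (he : ∀ i ∈ s, e i ≤ b - γ) (hρ : 1 ≤ ρ) (hdom : #s * Q < d * ρ ^ γ) :
    0 < powerSum s (d * b) (b - 1) (fun i => c i * e i) (fun i => e i - 1) ρ := by
  have hc' : ∀ i ∈ s, |c i * e i| ≤ Q * b := fun i hi => by
    rw [abs_mul, abs_of_nonneg (he₀ i hi)]
    exact mul_le_mul (hc i hi) (by linarith [he i hi]) (he₀ i hi) ((abs_nonneg _).trans (hc i hi))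
  have h := rpow_mul_sub_le_powerSum (s := s) (d := d * b) (b := b - 1) (γ := γ)
    (e := fun i => e i - 1) hρ hc' fun i hi => by linarith [he i hi]
  have hpos : 0 < ρ ^ (b - 1 - γ) * (d * b * ρ ^ γ - #s * (Q * b)) := by
    have : 0 < ρ ^ (b - 1 - γ) := Real.rpow_pos_of_pos (by linarith) _
    have : 0 < d * b * ρ ^ γ - #s * (Q * b) := by nlinarith
    positivity
  exact hpos.trans_le h

theorem exists_forall_le_mul_rpow (hd : 0 < d) (hγ : 0 < γ) (K : ℝ) :
    ∃ ρ₀, 1 ≤ ρ₀ ∧ ∀ ρ ≥ ρ₀, K ≤ d * ρ ^ γ := by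
  obtain ⟨N, hN⟩ := eventually_atTop.1
    (((tendsto_rpow_atTop hγ).const_mul_atTop hd).eventually_ge_atTop K)
  exact ⟨max 1 N, le_max_left _ _, fun ρ hρ => hN ρ (le_of_max_le_right hρ)⟩

theorem strictMonoOn_powerSum (hγ : 0 < γ) (hγb : γ < b) (hc : ∀ i ∈ s, |c i| ≤ Q)
    (he₀ : ∀ i ∈ s, 0 ≤ e i) (he : ∀ i ∈ s, e i ≤ b - γ) (hρ₀ : 1 ≤ ρ₀)
    (hdom : ∀ ρ ≥ ρ₀, #s * Q + 1 ≤ d * ρ ^ γ) : StrictMonoOn (powerSum s d b c e) (Ici ρ₀) := by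
  refine strictMonoOn_of_hasDerivWithinAt_pos (convex_Ici ρ₀)
    (continuousOn_powerSum.mono (Ici_subset_Ioi.2 (by linarith)))
    (fun ρ hρ => (hasDerivAt_powerSum ?_).hasDerivWithinAt) fun ρ hρ => ?_
  all_goals rw [interior_Ici] at hρ
  · linarith [mem_Ioi.1 hρ]
  · exact powerSum_deriv_pos (by linarith) hγ.le hc he₀ he (by linarith [mem_Ioi.1 hρ])
      (by linarith [hdom ρ (le_of_lt hρ)])

theorem tendsto_powerSum_atTop (hγb : γ < b) (hc : ∀ i ∈ s, |c i| ≤ Q)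
    (he : ∀ i ∈ s, e i ≤ b - γ) (hρ₀ : 1 ≤ ρ₀) (hdom : ∀ ρ ≥ ρ₀, #s * Q + 1 ≤ d * ρ ^ γ) :
    Tendsto (powerSum s d b c e) atTop atTop := by
  refine tendsto_atTop_mono' atTop ?_ (tendsto_rpow_atTop (sub_pos.2 hγb))
  filter_upwards [eventually_ge_atTop ρ₀] with ρ hρ
  refine le_trans ?_ (rpow_mul_sub_le_powerSum (hρ₀.trans hρ) hc he)
  have hρ0 : 0 < ρ := lt_of_lt_of_le one_pos (hρ₀.trans hρ)
  exact le_mul_of_one_le_right (Real.rpow_nonneg hρ0.le _) (by linarith [hdom ρ hρ])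

theorem exists_powerSum_eq (hγb : γ < b) (hc : ∀ i ∈ s, |c i| ≤ Q)
    (he : ∀ i ∈ s, e i ≤ b - γ) (hρ₀ : 1 ≤ ρ₀) (hdom : ∀ ρ ≥ ρ₀, #s * Q + 1 ≤ d * ρ ^ γ)
    {I : ℝ} (hI : powerSum s d b c e ρ₀ ≤ I) :
    ∃ ρ ∈ Ici ρ₀, powerSum s d b c e ρ = I :=
  isPreconnected_Ici.intermediate_value_Ici self_mem_Ici (le_principal_iff.2 (Ici_mem_atTop ρ₀))
    (continuousOn_powerSum.mono (Ici_subset_Ioi.2 (by linarith)))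
    (tendsto_powerSum_atTop hγb hc he hρ₀ hdom) hI

theorem invFunOn_powerSum_spec (hγ : 0 < γ) (hγb : γ < b) (hc : ∀ i ∈ s, |c i| ≤ Q)
    (he : ∀ i ∈ s, e i ≤ b - γ) (hρ₀ : 1 ≤ ρ₀) (hdom : ∀ ρ ≥ ρ₀, #s * Q + 1 ≤ d * ρ ^ γ)
    {I : ℝ} (hI : (d + #s * Q) * ρ₀ ^ b < I) :
    ρ₀ < invFunOn (powerSum s d b c e) (Ici ρ₀) I ∧
      powerSum s d b c e (invFunOn (powerSum s d b c e) (Ici ρ₀) I) = I := by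
  have hle : powerSum s d b c e ρ₀ ≤ (d + #s * Q) * ρ₀ ^ b :=
    powerSum_le_mul_rpow hρ₀ hc fun i hi => by linarith [he i hi]
  obtain ⟨hmem, hroot⟩ := invFunOn_pos (exists_powerSum_eq hγb hc he hρ₀ hdom (hle.trans hI.le))
  refine ⟨lt_of_le_of_ne hmem fun h => ?_, hroot⟩
  rw [← h] at hroot
  linarith

theorem existsUnique_powerSum_eq (hγ : 0 < γ) (hγb : γ < b) (hc : ∀ i ∈ s, |c i| ≤ Q)
    (he₀ : ∀ i ∈ s, 0 ≤ e i) (he : ∀ i ∈ s, e i ≤ b - γ) (hρ₀ : 1 ≤ ρ₀)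
    (hdom : ∀ ρ ≥ ρ₀, #s * Q + 1 ≤ d * ρ ^ γ) {I : ℝ} (hI : (d + #s * Q) * ρ₀ ^ b < I) :
    ∃! ρ, ρ₀ ≤ ρ ∧ powerSum s d b c e ρ = I := by
  obtain ⟨hlt, hroot⟩ := invFunOn_powerSum_spec hγ hγb hc he hρ₀ hdom hI
  refine ⟨_, ⟨hlt.le, hroot⟩, fun ρ ⟨hρ, hρI⟩ => ?_⟩
  exact (strictMonoOn_powerSum hγ hγb hc he₀ he hρ₀ hdom).injOn hρ hlt.le (hρI.trans hroot.symm)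

theorem contDiffAt_powerSum_uncurry {E : Type*} [NormedAddCommGroup E] [NormedSpace ℝ E]
    {n : WithTop ℕ∞} {q : ι → E → ℝ} {x : ℝ × E} (hq : ∀ i ∈ s, ContDiffAt ℝ n (q i) x.2)
    (hx : x.1 ≠ 0) :
    ContDiffAt ℝ n (fun y : ℝ × E => powerSum s d b (fun i => q i y.2) e y.1) x :=
  (contDiffAt_const.mul ((Real.contDiffAt_rpow_const_of_ne hx).comp x contDiffAt_fst)).add
    (ContDiffAt.sum fun i hi => ((hq i hi).comp x contDiffAt_snd).mul
      ((Real.contDiffAt_rpow_const_of_ne hx).comp x contDiffAt_fst))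

theorem contDiffOn_invFunOn_powerSum {E : Type*} [NormedAddCommGroup E] [NormedSpace ℝ E]
    [CompleteSpace E] {n : WithTop ℕ∞} {q : ι → E → ℝ} (hq : ∀ i ∈ s, ContDiff ℝ n (q i))
    (hn : n ≠ 0) (hγ : 0 < γ) (hγb : γ < b) (hqQ : ∀ i ∈ s, ∀ θ, |q i θ| ≤ Q)
    (he₀ : ∀ i ∈ s, 0 ≤ e i) (he : ∀ i ∈ s, e i ≤ b - γ) (hρ₀ : 1 ≤ ρ₀)
    (hdom : ∀ ρ ≥ ρ₀, #s * Q + 1 ≤ d * ρ ^ γ) :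
    ContDiffOn ℝ n (fun y : ℝ × E => invFunOn (powerSum s d b (fun i => q i y.2) e) (Ici ρ₀) y.1)
      (Ioi ((d + #s * Q) * ρ₀ ^ b) ×ˢ univ) := by
  intro z hz
  have hspec (y : ℝ × E) (hy : (d + #s * Q) * ρ₀ ^ b < y.1) :=
    invFunOn_powerSum_spec hγ hγb (fun i hi => hqQ i hi y.2) he hρ₀ hdom hy
  obtain ⟨hρ, hroot⟩ := hspec z hz.1
  set r := invFunOn (powerSum s d b (fun i => q i z.2) e) (Ici ρ₀) z.1
  have hr0 : 0 < r := by linarith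
  have hderiv := hasDerivAt_powerSum (s := s) (d := d) (b := b) (c := fun i => q i z.2) (e := e) hr0
  have hderiv_pos :
      0 < powerSum s (d * b) (b - 1) (fun i => q i z.2 * e i) (fun i => e i - 1) r :=
    powerSum_deriv_pos (by linarith) hγ.le (fun i hi => hqQ i hi z.2) he₀ he
    (by linarith) (by linarith [hdom r hρ.le])
  refine (contDiffAt_of_isolated_root (contDiffAt_powerSum_uncurry
    (fun i hi => (hq i hi).contDiffAt) hr0.ne') hn hderiv hderiv_pos.ne' hroot (Ioi_mem_nhds hρ)
    ?_).contDiffWithinAt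
  filter_upwards [(isOpen_Ioi.preimage continuous_fst).mem_nhds hz.1] with y hy ρ hρy hroot_y
  exact (existsUnique_powerSum_eq hγ hγb (fun i hi => hqQ i hi y.2) he₀ he hρ₀ hdom hy).unique
    ⟨le_of_lt hρy, hroot_y⟩ ⟨(hspec y hy).1.le, (hspec y hy).2⟩

end PowerSum

theorem Finset.exists_nonneg_forall_abs_le {ι X : Type*} (s : Finset ι) {f : ι → X → ℝ}
    (h : ∀ i ∈ s, ∃ M, ∀ x, |f i x| ≤ M) : ∃ M, 0 ≤ M ∧ ∀ i ∈ s, ∀ x, |f i x| ≤ M := by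
  choose! M hM using h
  exact ⟨∑ i ∈ s, |M i|, by positivity, fun i hi x => (hM i hi x).trans
    ((le_abs_self _).trans (single_le_sum (fun j _ => abs_nonneg (M j)) hi))⟩

theorem exists_abs_comp_fract_mul_le {g P : ℝ → ℝ} (hg : Continuous g) (hP : Periodic P 1)
    (hPc : Continuous P) : ∃ M, ∀ x : ℝ × ℝ, |g (Int.fract x.1) * P x.2| ≤ M := by
  obtain ⟨A, hA⟩ := isBounded_iff_forall_norm_le.1 (hP.isBounded_of_continuous one_ne_zero hPc)
  obtain ⟨B, hB⟩ := (isCompact_Icc (a := (0 : ℝ)) (b := 1)).exists_bound_of_continuousOn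
    hg.continuousOn
  refine ⟨B * A, fun x => ?_⟩
  have hgB : |g (Int.fract x.1)| ≤ B := hB _ ⟨Int.fract_nonneg _, (Int.fract_lt_one _).le⟩
  rw [abs_mul]
  exact mul_le_mul hgB (hA _ (mem_range_self _)) (abs_nonneg _) ((abs_nonneg _).trans hgB)

theorem mul_succ_le_two_mul_sub {n i : ℕ} {α β : ℝ} (hα : α = 1 / (n + 2))
    (hβ : β = (n + 1) / (n + 2)) (hi : i ≤ 2 * n) : α * ((i : ℝ) + 1) ≤ 2 * β - α := by
  have hi' : (i : ℝ) ≤ 2 * n := by exact_mod_cast hi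
  have hβα : 2 * β - α = α * (2 * n + 1) := by rw [hα, hβ]; field_simp; ring
  rw [hβα]
  exact mul_le_mul_of_nonneg_left (by linarith) (by rw [hα]; positivity)

theorem H3_implicit_function_R_general
    (n : ℕ)
    (C S : ℝ → ℝ)
    (hC' : ∀ t, HasDerivAt C (S t) t)
    (T₀ : ℝ) (hT₀pos : 0 < T₀)
    (α β a d : ℝ)
    (hα : α = 1 / (n + 2)) (hβ : β = (n + 1) / (n + 2))
    (ha : a = T₀ / α) (hd : d = (2 * a) ^ (2 * β) / (2 * n + 2))
    (p : ℕ → ℝ → ℝ)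
    (hp : ∀ i ≤ 2 * n, ContDiff ℝ 5 (p i))
    (hpper : ∀ i ≤ 2 * n, ∀ t : ℝ, p i (t + 1) = p i t)
    (H₃ : ℝ → ℝ → ℝ → ℝ)
    (hH₃ : ∀ ρ φ t : ℝ, H₃ ρ φ t =
      d * ρ ^ (2 * β) +
        ∑ i ∈ Finset.range (2 * n + 1),
          p i t * (2 * a * ρ) ^ (α * ((i : ℝ) + 1)) *
            C ((φ - ⌊φ⌋) * T₀ / 2) ^ (i + 1) / ((i : ℝ) + 1)) :
    ∃ ρ₀ : ℝ, 1 ≤ ρ₀ ∧ ∃ I₀ : ℝ, 0 < I₀ ∧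
      (∀ I : ℝ, I₀ ≤ I → ∀ θ τ : ℝ, ∃! ρ : ℝ, ρ₀ ≤ ρ ∧ H₃ ρ τ θ = I) ∧
      ∃ R : ℝ → ℝ → ℝ → ℝ,
        (∀ I : ℝ, I₀ ≤ I → ∀ θ τ : ℝ,
          ρ₀ ≤ d ^ (-(1 / (2 * β))) * I ^ (1 / (2 * β)) - R I θ τ ∧
          H₃ (d ^ (-(1 / (2 * β))) * I ^ (1 / (2 * β)) - R I θ τ) τ θ = I) ∧
        (∀ τ : ℝ, ContDiffOn ℝ 5 (fun q : ℝ × ℝ => R q.1 q.2 τ)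
          (Set.Ici I₀ ×ˢ (Set.univ : Set ℝ))) := by
  have hα0 : 0 < α := by rw [hα]; positivity
  have ha0 : 0 < 2 * a := by rw [ha]; positivity
  have hd0 : 0 < d := by rw [hd]; positivity
  set s := range (2 * n + 1)
  set e : ℕ → ℝ := fun i => α * ((i : ℝ) + 1)
  set c : ℕ → ℝ → ℝ → ℝ := fun i τ θ =>
    (2 * a) ^ e i / ((i : ℝ) + 1) * C (Int.fract τ * T₀ / 2) ^ (i + 1) * p i θ
  have hs : ∀ i ∈ s, i ≤ 2 * n := fun i hi => Nat.lt_succ_iff.1 (mem_range.1 hi)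
  have he₀ : ∀ i ∈ s, 0 ≤ e i := fun i _ => by positivity
  have he : ∀ i ∈ s, e i ≤ 2 * β - α := fun i hi => mul_succ_le_two_mul_sub hα hβ (hs i hi)
  have hαβ : α < 2 * β := by
    have h0 := mul_succ_le_two_mul_sub (i := 0) hα hβ (Nat.zero_le _)
    norm_num at h0
    linarith
  have hH (ρ θ τ : ℝ) (hρ : 0 ≤ ρ) : H₃ ρ τ θ = powerSum s d (2 * β) (fun i => c i τ θ) e ρ := by
    rw [hH₃, powerSum]
    congr 1
    refine sum_congr rfl fun i _ => ?_
    rw [Real.mul_rpow ha0.le hρ, Int.self_sub_floor]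
    ring
  have hCc : Continuous C := continuous_iff_continuousAt.2 fun t => (hC' t).continuousAt
  obtain ⟨Q, hQ, hcQ⟩ := s.exists_nonneg_forall_abs_le fun i hi => exists_abs_comp_fract_mul_le
    (g := fun x => (2 * a) ^ e i / ((i : ℝ) + 1) * C (x * T₀ / 2) ^ (i + 1)) (by fun_prop)
    (hpper i (hs i hi)) (hp i (hs i hi)).continuous
  obtain ⟨ρ₀, hρ₀, hdom⟩ := exists_forall_le_mul_rpow hd0 hα0 (#s * Q + 1)
  set B := (d + #s * Q) * ρ₀ ^ (2 * β)
  have hc (τ θ : ℝ) : ∀ i ∈ s, |c i τ θ| ≤ Q := fun i hi => hcQ i hi (τ, θ)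
  refine ⟨ρ₀, hρ₀, B + 1, by positivity, fun I hI θ τ => ?_, fun I θ τ =>
    d ^ (-(1 / (2 * β))) * I ^ (1 / (2 * β)) -
      invFunOn (powerSum s d (2 * β) (fun i => c i τ θ) e) (Ici ρ₀) I, fun I hI θ τ => ?_,
    fun τ => ?_⟩
  · refine (existsUnique_congr fun ρ => and_congr_right fun hρ => ?_).2
      (existsUnique_powerSum_eq hα0 hαβ (hc τ θ) he₀ he hρ₀ hdom (by linarith))
    rw [hH ρ θ τ (by linarith)]
  · obtain ⟨hlt, hroot⟩ := invFunOn_powerSum_spec hα0 hαβ (hc τ θ) he hρ₀ hdom (by linarith)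
    rw [sub_sub_cancel, hH _ θ τ (by linarith)]
    exact ⟨hlt.le, hroot⟩
  · have hpos : ∀ w ∈ Ici (B + 1) ×ˢ (univ : Set ℝ), w.1 ≠ 0 :=
      fun w hw => (lt_of_lt_of_le (by positivity) hw.1).ne'
    exact (contDiffOn_const.mul (contDiffOn_fst.rpow_const_of_ne hpos)).sub
      ((contDiffOn_invFunOn_powerSum (q := fun i => c i τ)
        (fun i hi => contDiff_const.mul (hp i (hs i hi))) (by norm_num) hα0 hαβ
        (fun i hi θ => hc τ θ i hi) he₀ he hρ₀ hdom).mono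
        (prod_mono (Ici_subset_Ioi.2 (lt_add_one B)) subset_rfl))

/-- There exist `ρ₀ ≥ 1` and `I₀ > 0` such that for every `I ≥ I₀` and
every `θ, τ` there is a unique `ρ ≥ ρ₀` with `H₃(ρ, τ, θ) = I`; moreover, writing
`ρ = d^(-1/(2β))·I^(1/(2β)) − R(I, θ, τ)`, for each fixed `τ` the function
`(I, θ) ↦ R(I, θ, τ)` is `C⁵` on `[I₀, ∞) × ℝ`. -/
theorem H3_implicit_function_R
    (n : ℕ) (hn : 1 ≤ n)
    (C S : ℝ → ℝ)
    (hC' : ∀ t, HasDerivAt C (S t) t)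
    (hS' : ∀ t, HasDerivAt S (-(C t ^ (2 * n + 1))) t)
    (hC0 : C 0 = 1) (hS0 : S 0 = 0)
    (T₀ : ℝ) (hT₀pos : 0 < T₀)
    (hCper : Function.Periodic C T₀) (hSper : Function.Periodic S T₀)
    (hT₀min : ∀ T : ℝ, 0 < T → Function.Periodic C T → Function.Periodic S T → T₀ ≤ T)
    (α β a d : ℝ)
    (hα : α = 1 / (n + 2)) (hβ : β = (n + 1) / (n + 2))
    (ha : a = T₀ / α) (hd : d = (2 * a) ^ (2 * β) / (2 * n + 2))
    (p : ℕ → ℝ → ℝ)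
    (hp : ∀ i ≤ 2 * n, ContDiff ℝ 5 (p i))
    (hpper : ∀ i ≤ 2 * n, ∀ t : ℝ, p i (t + 1) = p i t)
    (H₃ : ℝ → ℝ → ℝ → ℝ)
    (hH₃ : ∀ ρ φ t : ℝ, H₃ ρ φ t =
      d * ρ ^ (2 * β) +
        ∑ i ∈ Finset.range (2 * n + 1),
          p i t * (2 * a * ρ) ^ (α * ((i : ℝ) + 1)) *
            C ((φ - ⌊φ⌋) * T₀ / 2) ^ (i + 1) / ((i : ℝ) + 1)) :
    ∃ ρ₀ : ℝ, 1 ≤ ρ₀ ∧ ∃ I₀ : ℝ, 0 < I₀ ∧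
      (∀ I : ℝ, I₀ ≤ I → ∀ θ τ : ℝ, ∃! ρ : ℝ, ρ₀ ≤ ρ ∧ H₃ ρ τ θ = I) ∧
      ∃ R : ℝ → ℝ → ℝ → ℝ,
        (∀ I : ℝ, I₀ ≤ I → ∀ θ τ : ℝ,
          ρ₀ ≤ d ^ (-(1 / (2 * β))) * I ^ (1 / (2 * β)) - R I θ τ ∧
          H₃ (d ^ (-(1 / (2 * β))) * I ^ (1 / (2 * β)) - R I θ τ) τ θ = I) ∧
        (∀ τ : ℝ, ContDiffOn ℝ 5 (fun q : ℝ × ℝ => R q.1 q.2 τ)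
          (Set.Ici I₀ ×ˢ (Set.univ : Set ℝ))) :=
  H3_implicit_function_R_general n C S hC' T₀ hT₀pos α β a d hα hβ ha hd p hp hpper H₃ hH₃
end

section
/- There exist I₁ ≥ I₀ and a constant K > 0 such that |R(I, θ, τ)| ≤ K · I^{1/2} for all I ≥ I₁ and all θ, τ ∈ ℝ. -/
/-!
Write `ρ = (I/d)^{1/γ} - R` with `γ = 2β`. The equation `H₃(ρ, τ, θ) = I` reads `d ρ^γ + E = I`,
where the perturbation `E` is a sum of terms `(2aρ)^{α(i+1)}` with bounded coefficients, so
`|E| ≤ A (1 + ρ^g)` with `g = α(2n+1) < γ`. This first gives `ρ^γ = O(I)`, hence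
`|E| = O(I^{g/γ})`, which is `o(I)`. Then `ρ = ((I - E)/d)^{1/γ}`, and the mean value theorem for
`x ↦ x^{1/γ}` on `[I/2, ∞)` gives `|R| = O(I^{1/γ - 1} |E|) = O(I^{(1+g)/γ - 1}) = O(I^{1/2})`.
-/

open Filter Finset

lemma abs_rpow_sub_rpow_le_of_le {c x y s : ℝ} (hc : 0 < c) (hx : c ≤ x) (hy : c ≤ y)
    (hs0 : 0 ≤ s) (hs1 : s ≤ 1) : |x ^ s - y ^ s| ≤ s * c ^ (s - 1) * |x - y| := by
  have hderiv : ∀ z ∈ Set.Ici c, HasDerivWithinAt (fun z : ℝ => z ^ s) (s * z ^ (s - 1))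
      (Set.Ici c) z := fun z hz =>
    (Real.hasDerivAt_rpow_const (Or.inl (hc.trans_le hz).ne')).hasDerivWithinAt
  have hbound : ∀ z ∈ Set.Ici c, ‖s * z ^ (s - 1)‖ ≤ s * c ^ (s - 1) := fun z hcz => by
    have hz : (0 : ℝ) < z := hc.trans_le hcz
    rw [Real.norm_eq_abs, abs_of_nonneg (by positivity)]
    exact mul_le_mul_of_nonneg_left (Real.rpow_le_rpow_of_nonpos hc hcz (by linarith)) hs0
  simpa only [Real.norm_eq_abs] using
    (convex_Ici c).norm_image_sub_le_of_norm_hasDerivWithin_le hderiv hbound hy hx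

lemma abs_rpow_sub_rpow_sub_le {x e s : ℝ} (hx : 0 < x) (he : |e| ≤ x / 2) (hs0 : 0 ≤ s)
    (hs1 : s ≤ 1) : |x ^ s - (x - e) ^ s| ≤ s * 2 ^ (1 - s) * x ^ (s - 1) * |e| := by
  have hxe : x / 2 ≤ x - e := by linarith [le_abs_self e]
  calc |x ^ s - (x - e) ^ s| ≤ s * (x / 2) ^ (s - 1) * |x - (x - e)| :=
        abs_rpow_sub_rpow_le_of_le (by positivity) (by linarith) hxe hs0 hs1
    _ = s * 2 ^ (1 - s) * x ^ (s - 1) * |e| := by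
        rw [sub_sub_cancel, Real.div_rpow hx.le zero_le_two, div_eq_mul_inv,
          ← Real.rpow_neg zero_le_two, neg_sub]
        ring

lemma rpow_le_one_add_rpow {x e g : ℝ} (hx : 0 ≤ x) (he : 0 ≤ e) (heg : e ≤ g) :
    x ^ e ≤ 1 + x ^ g := by
  rcases le_total x 1 with h | h
  · linarith [Real.rpow_le_one hx h he, Real.rpow_nonneg hx g]
  · linarith [Real.rpow_le_rpow_of_exponent_le h heg]

lemma Finset.exists_abs_sum_le_mul {ι X : Type*} (s : Finset ι) (D : Set X) (f : ι → X → ℝ)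
    (w : X → ℝ) (h : ∀ i ∈ s, ∃ b, ∀ x ∈ D, |f i x| ≤ b * w x) :
    ∃ B, ∀ x ∈ D, |∑ i ∈ s, f i x| ≤ B * w x := by
  classical
  induction s using Finset.induction_on with
  | empty => exact ⟨0, by simp⟩
  | insert a s ha ih =>
    obtain ⟨b, hb⟩ := h a (mem_insert_self a s)
    obtain ⟨B, hB⟩ := ih fun i hi => h i (mem_insert_of_mem hi)
    refine ⟨b + B, fun x hx => ?_⟩
    rw [sum_insert ha, add_mul]
    exact (abs_add_le _ _).trans (add_le_add (hb x hx) (hB x hx))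

lemma exists_abs_comp_sub_floor_le {f : ℝ → ℝ} (hf : Continuous f) :
    ∃ M, ∀ φ : ℝ, |f (φ - ⌊φ⌋)| ≤ M := by
  obtain ⟨M, hM⟩ := (isCompact_Icc (a := 0) (b := 1)).exists_bound_of_continuousOn hf.continuousOn
  refine ⟨M, fun φ => ?_⟩
  rw [Int.self_sub_floor]
  exact hM _ ⟨Int.fract_nonneg φ, (Int.fract_lt_one φ).le⟩

lemma exists_abs_sum_rpow_mul_pow_le {N : ℕ} {α b M : ℝ} {p : ℕ → ℝ → ℝ} {c : ℝ → ℝ}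
    (hα : 0 ≤ α) (hb : 0 ≤ b) (hp : ∀ i ≤ N, ∃ P, ∀ t, |p i t| ≤ P) (hc : ∀ φ, |c φ| ≤ M) :
    ∃ B, ∀ ρ θ φ : ℝ, 0 < ρ →
      |∑ i ∈ range (N + 1), p i θ * (b * ρ) ^ (α * ((i : ℝ) + 1)) * c φ ^ (i + 1) / ((i : ℝ) + 1)|
        ≤ B * (1 + ρ ^ (α * ((N : ℝ) + 1))) := by
  obtain ⟨B, hB⟩ := (range (N + 1)).exists_abs_sum_le_mul {x : ℝ × ℝ × ℝ | 0 < x.1}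
    (fun i x => p i x.2.1 * (b * x.1) ^ (α * ((i : ℝ) + 1)) * c x.2.2 ^ (i + 1) / ((i : ℝ) + 1))
    (fun x => 1 + x.1 ^ (α * ((N : ℝ) + 1))) fun i hi => by
      have hiN : i ≤ N := Nat.lt_succ_iff.1 (mem_range.1 hi)
      obtain ⟨P, hP⟩ := hp i hiN
      have hP0 : 0 ≤ P := (abs_nonneg _).trans (hP 0)
      set e := α * ((i : ℝ) + 1)
      have heg : e ≤ α * ((N : ℝ) + 1) :=
        mul_le_mul_of_nonneg_left (by exact_mod_cast Nat.add_le_add_right hiN 1) hα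
      refine ⟨P * b ^ e * M ^ (i + 1) / ((i : ℝ) + 1), fun x (hx : 0 < x.1) => ?_⟩
      rw [abs_div, abs_mul, abs_mul, abs_pow, abs_of_pos (by positivity : (0 : ℝ) < i + 1),
        abs_of_nonneg (Real.rpow_nonneg (mul_nonneg hb hx.le) e), Real.mul_rpow hb hx.le]
      calc |p i x.2.1| * (b ^ e * x.1 ^ e) * |c x.2.2| ^ (i + 1) / ((i : ℝ) + 1)
          ≤ P * (b ^ e * (1 + x.1 ^ (α * ((N : ℝ) + 1)))) * M ^ (i + 1) / ((i : ℝ) + 1) := by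
            gcongr
            · exact hP _
            · exact rpow_le_one_add_rpow hx.le (by positivity) heg
            · exact hc _
        _ = P * b ^ e * M ^ (i + 1) / ((i : ℝ) + 1) * (1 + x.1 ^ (α * ((N : ℝ) + 1))) := by ring
  exact ⟨B, fun ρ θ φ hρ => hB (ρ, θ, φ) hρ⟩

lemma exists_rpow_le_mul_of_mul_rpow_le {d γ g A : ℝ} (hd : 0 < d) (hg : 0 ≤ g) (hgγ : g < γ)
    (hA : 0 ≤ A) :
    ∃ K, 0 < K ∧ ∀ I ρ : ℝ, 1 ≤ I → 0 < ρ → d * ρ ^ γ ≤ I + A * (1 + ρ ^ g) → ρ ^ γ ≤ K * I := by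
  set ρ₀ := (2 * A / d) ^ (γ - g)⁻¹
  have hρ₀ : 0 ≤ ρ₀ := by positivity
  refine ⟨ρ₀ ^ γ + 2 * (1 + A) / d, by positivity, fun I ρ hI hρ hle => ?_⟩
  have hρ₀γ : 0 ≤ ρ₀ ^ γ := by positivity
  have hρ₀I : 0 ≤ ρ₀ ^ γ * I := mul_nonneg hρ₀γ (by linarith)
  have hAI : 0 ≤ 2 * (1 + A) / d * I := mul_nonneg (by positivity) (by linarith)
  rw [add_mul]
  rcases le_or_gt ρ ρ₀ with h | h
  · linarith [Real.rpow_le_rpow hρ.le h (hg.trans hgγ.le), le_mul_of_one_le_right hρ₀γ hI]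
  · have hgap : 2 * A / d ≤ ρ ^ (γ - g) := by
      calc 2 * A / d = ρ₀ ^ (γ - g) := (Real.rpow_inv_rpow (by positivity) (by linarith)).symm
        _ ≤ ρ ^ (γ - g) := Real.rpow_le_rpow hρ₀ h.le (by linarith)
    have habsorb : A * ρ ^ g ≤ d / 2 * ρ ^ γ := by
      rw [← sub_add_cancel γ g, Real.rpow_add hρ, ← mul_assoc]
      gcongr
      linarith [(div_le_iff₀ hd).1 hgap]
    have : ρ ^ γ ≤ 2 * (1 + A) / d * I := by
      rw [div_mul_eq_mul_div, le_div_iff₀ hd]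
      linarith [le_mul_of_one_le_right hA hI]
    linarith

lemma eventually_mul_rpow_le_half (K : ℝ) {q : ℝ} (hq : q < 1) :
    ∀ᶠ I in atTop, K * I ^ q ≤ I / 2 := by
  have hlim := (tendsto_rpow_neg_atTop (sub_pos.2 hq)).const_mul K
  rw [mul_zero] at hlim
  filter_upwards [hlim.eventually (ge_mem_nhds one_half_pos), eventually_gt_atTop 0]
    with I hI hI0
  calc K * I ^ q = K * (I ^ (-(1 - q)) * I) := by
        rw [← Real.rpow_add_one hI0.ne', neg_sub, sub_add_cancel]
    _ = K * I ^ (-(1 - q)) * I := (mul_assoc _ _ _).symm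
    _ ≤ 1 / 2 * I := by gcongr
    _ = I / 2 := by ring

lemma eq_rpow_inv_of_mul_rpow_add_eq {d γ ρ E I : ℝ} (hd : 0 < d) (hγ : γ ≠ 0) (hρ : 0 ≤ ρ)
    (h : d * ρ ^ γ + E = I) : ρ = d ^ (-(1 / γ)) * (I - E) ^ (1 / γ) := by
  rw [Real.rpow_neg hd.le, ← Real.inv_rpow hd.le, ← h, add_sub_cancel_right,
    ← Real.mul_rpow (by positivity) (by positivity), inv_mul_cancel_left₀ hd.ne',
    ← Real.rpow_mul hρ, mul_one_div_cancel hγ, Real.rpow_one]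

theorem exists_abs_rpow_inv_sub_le {d γ g A : ℝ} (hd : 0 < d) (hγ : 1 ≤ γ) (hg : 0 ≤ g)
    (hgγ : g < γ) (hA : 0 < A) :
    ∃ K, 0 < K ∧ ∀ᶠ I in atTop, ∀ ρ E : ℝ, 0 < ρ → d * ρ ^ γ + E = I →
      |E| ≤ A * (1 + ρ ^ g) → |d ^ (-(1 / γ)) * I ^ (1 / γ) - ρ| ≤ K * I ^ ((1 + g) / γ - 1) := by
  obtain ⟨K₁, hK₁, hgrowth⟩ := exists_rpow_le_mul_of_mul_rpow_le hd hg hgγ hA.le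
  have hγ0 : 0 < γ := by linarith
  set s := 1 / γ
  set q := g / γ
  set K₂ := A * (1 + K₁ ^ q)
  have hq0 : 0 ≤ q := by positivity
  have hq1 : q < 1 := (div_lt_one hγ0).2 hgγ
  have hs1 : s ≤ 1 := (div_le_one hγ0).2 hγ
  refine ⟨d ^ (-s) * (s * 2 ^ (1 - s) * K₂), by positivity, ?_⟩
  filter_upwards [eventually_mul_rpow_le_half K₂ hq1, eventually_ge_atTop 1]
    with I hsmall hI ρ E hρ hEq hE
  have hI0 : 0 < I := by linarith
  have hEI : |E| ≤ K₂ * I ^ q := by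
    have hργ : ρ ^ γ ≤ K₁ * I := hgrowth I ρ hI hρ (by linarith [neg_abs_le E])
    have hρg : ρ ^ g ≤ K₁ ^ q * I ^ q := by
      calc ρ ^ g = (ρ ^ γ) ^ q := by rw [← Real.rpow_mul hρ.le, mul_div_cancel₀ _ hγ0.ne']
        _ ≤ (K₁ * I) ^ q := by gcongr
        _ = K₁ ^ q * I ^ q := Real.mul_rpow hK₁.le hI0.le
    have hIq : 1 ≤ I ^ q := Real.one_le_rpow hI hq0
    calc |E| ≤ A * (1 + ρ ^ g) := hE
      _ ≤ A * (I ^ q + K₁ ^ q * I ^ q) := by gcongr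
      _ = K₂ * I ^ q := by ring
  rw [eq_rpow_inv_of_mul_rpow_add_eq hd hγ0.ne' hρ.le hEq, ← mul_sub, abs_mul,
    abs_of_pos (by positivity)]
  calc d ^ (-s) * |I ^ s - (I - E) ^ s| ≤ d ^ (-s) * (s * 2 ^ (1 - s) * I ^ (s - 1) * |E|) := by
        gcongr
        exact abs_rpow_sub_rpow_sub_le hI0 (hEI.trans hsmall) (by positivity) hs1
    _ ≤ d ^ (-s) * (s * 2 ^ (1 - s) * I ^ (s - 1) * (K₂ * I ^ q)) := by gcongr
    _ = d ^ (-s) * (s * 2 ^ (1 - s) * K₂) * I ^ (s - 1 + q) := by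
        rw [Real.rpow_add hI0]
        ring
    _ = d ^ (-s) * (s * 2 ^ (1 - s) * K₂) * I ^ ((1 + g) / γ - 1) := by
        congr 2
        ring

theorem R_growth_estimate_general
    (n : ℕ)
    (C S : ℝ → ℝ)
    (hC' : ∀ t, HasDerivAt C (S t) t)
    (T₀ : ℝ) (hT₀pos : 0 < T₀)
    (α β a d : ℝ)
    (hα : α = 1 / (n + 2)) (hβ : β = (n + 1) / (n + 2))
    (ha : a = T₀ / α) (hd : d = (2 * a) ^ (2 * β) / (2 * n + 2))
    (p : ℕ → ℝ → ℝ)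
    (hp : ∀ i ≤ 2 * n, ContDiff ℝ 5 (p i))
    (hpper : ∀ i ≤ 2 * n, ∀ t : ℝ, p i (t + 1) = p i t)
    (H₃ : ℝ → ℝ → ℝ → ℝ)
    (hH₃ : ∀ ρ φ t : ℝ, H₃ ρ φ t =
      d * ρ ^ (2 * β) +
        ∑ i ∈ Finset.range (2 * n + 1),
          p i t * (2 * a * ρ) ^ (α * ((i : ℝ) + 1)) *
            C ((φ - ⌊φ⌋) * T₀ / 2) ^ (i + 1) / ((i : ℝ) + 1))
    (I₀ : ℝ)
    (R : ℝ → ℝ → ℝ → ℝ)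
    (hR : ∀ I : ℝ, I₀ ≤ I → ∀ θ τ : ℝ,
      0 < d ^ (-(1 / (2 * β))) * I ^ (1 / (2 * β)) - R I θ τ ∧
      H₃ (d ^ (-(1 / (2 * β))) * I ^ (1 / (2 * β)) - R I θ τ) τ θ = I) :
    ∃ I₁ : ℝ, I₀ ≤ I₁ ∧ ∃ K : ℝ, 0 < K ∧
      ∀ I : ℝ, I₁ ≤ I → ∀ θ τ : ℝ, |R I θ τ| ≤ K * I ^ ((1 : ℝ) / 2) := by
  have hα0 : 0 < α := by rw [hα]; positivity
  have hd0 : 0 < d := by rw [hd, ha]; positivity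
  have hCcont : Continuous C := continuous_iff_continuousAt.2 fun t => (hC' t).continuousAt
  obtain ⟨M, hM⟩ := exists_abs_comp_sub_floor_le (f := fun u => C (u * T₀ / 2)) (by fun_prop)
  have hpbdd : ∀ i ≤ 2 * n, ∃ P, ∀ t, |p i t| ≤ P := fun i hi => by
    obtain ⟨P, hP⟩ := isBounded_iff_forall_norm_le.1 ((show Function.Periodic (p i) 1 from
      hpper i hi).isBounded_of_continuous one_ne_zero (hp i hi).continuous)
    exact ⟨P, fun t => hP _ (Set.mem_range_self t)⟩
  obtain ⟨B, hB⟩ := exists_abs_sum_rpow_mul_pow_le (b := 2 * a)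
    (c := fun φ => C ((φ - ⌊φ⌋) * T₀ / 2)) hα0.le (by rw [ha]; positivity) hpbdd hM
  set g := α * (((2 * n : ℕ) : ℝ) + 1)
  have hγ : 1 ≤ 2 * β := by rw [hβ, mul_div_assoc', le_div_iff₀ (by positivity)]; linarith
  have hgγ : g < 2 * β := by simp only [g, hα, hβ]; push_cast; field_simp; linarith
  have hexp : (1 + g) / (2 * β) - 1 = 1 / 2 := by simp only [g, hα, hβ]; push_cast; field_simp; ring
  obtain ⟨K, hK, hev⟩ := exists_abs_rpow_inv_sub_le hd0 hγ (by positivity) hgγ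
    (lt_max_of_lt_right one_pos : (0 : ℝ) < max B 1)
  obtain ⟨I₁, hI₁⟩ := eventually_atTop.1 hev
  refine ⟨max I₀ I₁, le_max_left _ _, K, hK, fun I hI θ τ => ?_⟩
  obtain ⟨hρ, hH⟩ := hR I (le_of_max_le_left hI) θ τ
  rw [hH₃] at hH
  have hE := (hB _ θ τ hρ).trans (mul_le_mul_of_nonneg_right (le_max_left B 1)
    (by have := Real.rpow_nonneg hρ.le g; linarith))
  simpa only [sub_sub_cancel, hexp] using hI₁ I (le_of_max_le_right hI) _ _ hρ hH hE

/-- There exist `I₁ ≥ I₀` and a constant `K > 0` such that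
`|R(I, θ, τ)| ≤ K · I^(1/2)` for all `I ≥ I₁` and all `θ, τ ∈ ℝ`. -/
theorem R_growth_estimate
    (n : ℕ) (hn : 1 ≤ n)
    (C S : ℝ → ℝ)
    (hC' : ∀ t, HasDerivAt C (S t) t)
    (hS' : ∀ t, HasDerivAt S (-(C t ^ (2 * n + 1))) t)
    (hC0 : C 0 = 1) (hS0 : S 0 = 0)
    (T₀ : ℝ) (hT₀pos : 0 < T₀)
    (hCper : Function.Periodic C T₀) (hSper : Function.Periodic S T₀)
    (hT₀min : ∀ T : ℝ, 0 < T → Function.Periodic C T → Function.Periodic S T → T₀ ≤ T)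
    (α β a d : ℝ)
    (hα : α = 1 / (n + 2)) (hβ : β = (n + 1) / (n + 2))
    (ha : a = T₀ / α) (hd : d = (2 * a) ^ (2 * β) / (2 * n + 2))
    (p : ℕ → ℝ → ℝ)
    (hp : ∀ i ≤ 2 * n, ContDiff ℝ 5 (p i))
    (hpper : ∀ i ≤ 2 * n, ∀ t : ℝ, p i (t + 1) = p i t)
    (H₃ : ℝ → ℝ → ℝ → ℝ)
    (hH₃ : ∀ ρ φ t : ℝ, H₃ ρ φ t =
      d * ρ ^ (2 * β) +
        ∑ i ∈ Finset.range (2 * n + 1),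
          p i t * (2 * a * ρ) ^ (α * ((i : ℝ) + 1)) *
            C ((φ - ⌊φ⌋) * T₀ / 2) ^ (i + 1) / ((i : ℝ) + 1))
    (I₀ : ℝ) (hI₀ : 0 < I₀)
    (R : ℝ → ℝ → ℝ → ℝ)
    (hR : ∀ I : ℝ, I₀ ≤ I → ∀ θ τ : ℝ,
      0 < d ^ (-(1 / (2 * β))) * I ^ (1 / (2 * β)) - R I θ τ ∧
      H₃ (d ^ (-(1 / (2 * β))) * I ^ (1 / (2 * β)) - R I θ τ) τ θ = I)
    (hRC5 : ∀ τ : ℝ, ContDiffOn ℝ 5 (fun q : ℝ × ℝ => R q.1 q.2 τ)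
      (Set.Ici I₀ ×ˢ (Set.univ : Set ℝ))) :
    ∃ I₁ : ℝ, I₀ ≤ I₁ ∧ ∃ K : ℝ, 0 < K ∧
      ∀ I : ℝ, I₁ ≤ I → ∀ θ τ : ℝ, |R I θ τ| ≤ K * I ^ ((1 : ℝ) / 2) :=
  R_growth_estimate_general n C S hC' T₀ hT₀pos α β a d hα hβ ha hd p hp hpper H₃ hH₃ I₀ R hR
end

section
/- (Lemma 4.1) Define g₁(I, θ, τ) = Σ_{i=0}^{2n} (2β·d^{1/(2β)})^{−1} · μᵢ(θ, τ) · I^{α(i+1)/(2β) − 1}. Then there is a constant K > 0 such that for all I ≥ 1, all θ, τ ∈ ℝ, and all nonnegative integers j, k with j + k ≤ 5, one has |∂_I^j ∂_θ^k g₁(I, θ, τ)| ≤ K · I^{1/2 − j}. -/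
/-!
`g₁` is a finite sum of separated terms `c i τ * I ^ ρ i * p i θ`. The factor `c i τ` is
bounded because it is a continuous function of the fractional part of `τ`; the `θ`-derivatives
of the `1`-periodic `C⁵` functions `p i` are bounded; and `∂_I^j I ^ ρ` is
`ρ (ρ - 1) ⋯ (ρ - j + 1) I ^ (ρ - j)`, where every exponent `ρ i = (i + 1) / (2n + 2) - 1`
(as `α / (2β) = 1 / (2n + 2)`) is at most `1 / 2`.
-/

open Bornology

theorem Function.Periodic.iteratedDeriv {f : ℝ → ℝ} {c : ℝ} (h : Function.Periodic f c)
    (k : ℕ) : Function.Periodic (_root_.iteratedDeriv k f) c := fun x => by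
  rw [← congrFun (iteratedDeriv_comp_add_const k f c) x, funext h]

theorem Function.Periodic.isBounded_range_iteratedDeriv {f : ℝ → ℝ} {c : ℝ} {m k : ℕ}
    (h : Function.Periodic f c) (hc : c ≠ 0) (hf : ContDiff ℝ m f) (hk : k ≤ m) :
    IsBounded (Set.range (_root_.iteratedDeriv k f)) :=
  (h.iteratedDeriv k).isBounded_of_continuous hc
    (hf.continuous_iteratedDeriv k (by exact_mod_cast hk))

theorem Continuous.isBounded_range_comp_fract {α : Type*} [PseudoMetricSpace α] {f : ℝ → α}
    (hf : Continuous f) : IsBounded (Set.range fun x => f (Int.fract x)) :=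
  (isCompact_Icc.image hf).isBounded.subset <| Set.range_subset_iff.2 fun x =>
    ⟨Int.fract x, ⟨Int.fract_nonneg x, (Int.fract_lt_one x).le⟩, rfl⟩

theorem iteratedDeriv_sum_mul_rpow {ι : Type*} (s : Finset ι) (D r : ι → ℝ) (j : ℕ) {x : ℝ}
    (hx : x ≠ 0) :
    iteratedDeriv j (fun y => ∑ i ∈ s, D i * y ^ r i) x =
      ∑ i ∈ s, D i * (descPochhammer ℝ j).eval (r i) * x ^ (r i - j) := by
  rw [iteratedDeriv_fun_sum fun i _ =>
    contDiffAt_const.mul (Real.contDiffAt_rpow_const (n := j) (Or.inl hx))]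
  refine Finset.sum_congr rfl fun i _ => ?_
  rw [iteratedDeriv_const_mul_field, iteratedDeriv_eq_iterate, Real.iter_deriv_rpow_const,
    mul_assoc]

theorem abs_iteratedDeriv_sum_mul_rpow_le {ι : Type*} (s : Finset ι) (D r : ι → ℝ) (j : ℕ)
    {ρ : ℝ} (hr : ∀ i ∈ s, r i ≤ ρ) {x : ℝ} (hx : 1 ≤ x) :
    |iteratedDeriv j (fun y => ∑ i ∈ s, D i * y ^ r i) x| ≤
      (∑ i ∈ s, |D i * (descPochhammer ℝ j).eval (r i)|) * x ^ (ρ - j) := by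
  have hx0 : 0 < x := by linarith
  rw [iteratedDeriv_sum_mul_rpow s D r j hx0.ne', Finset.sum_mul]
  refine (Finset.abs_sum_le_sum_abs _ _).trans (Finset.sum_le_sum fun i hi => ?_)
  rw [abs_mul, abs_of_pos (Real.rpow_pos_of_pos hx0 _)]
  gcongr
  exact hr i hi

theorem exists_abs_iteratedDeriv_iteratedDeriv_sum_le {ι T : Type*} (s : Finset ι)
    (c : ι → T → ℝ) (p : ι → ℝ → ℝ) (r : ι → ℝ) {m N : ℕ} {ρ : ℝ}
    (hp : ∀ i ∈ s, ContDiff ℝ m (p i))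
    (hc : ∀ i ∈ s, IsBounded (Set.range (c i)))
    (hpb : ∀ i ∈ s, ∀ k ≤ m, IsBounded (Set.range (iteratedDeriv k (p i))))
    (hr : ∀ i ∈ s, r i ≤ ρ) :
    ∃ K, 0 < K ∧ ∀ x, 1 ≤ x → ∀ θ t, ∀ j ≤ N, ∀ k ≤ m,
      |iteratedDeriv j (fun x' => iteratedDeriv k
          (fun θ' => ∑ i ∈ s, c i t * x' ^ r i * p i θ') θ) x| ≤ K * x ^ (ρ - j) := by
  obtain ⟨Mc, hMc0, hMc⟩ := ((isBounded_biUnion_finset s).2 hc).exists_pos_norm_le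
  obtain ⟨Mp, hMp0, hMp⟩ := ((isBounded_biUnion_finset s).2 fun i hi =>
    (isBounded_biUnion_finset (Finset.range (m + 1))).2 fun k hk =>
      hpb i hi k (Finset.mem_range_succ_iff.1 hk)).exists_pos_norm_le
  obtain ⟨A, hA0, hA⟩ := ((isBounded_biUnion_finset s).2 fun i _ =>
    (isBounded_biUnion_finset (Finset.range (N + 1))).2 fun j _ =>
      isBounded_singleton (x := (descPochhammer ℝ j).eval (r i))).exists_pos_norm_le
  refine ⟨s.card * (Mc * Mp * A) + 1, by positivity, fun x hx θ t j hj k hk => ?_⟩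
  have hsep : (fun x' => iteratedDeriv k (fun θ' => ∑ i ∈ s, c i t * x' ^ r i * p i θ') θ) =
      fun x' => ∑ i ∈ s, c i t * iteratedDeriv k (p i) θ * x' ^ r i := by
    funext x'
    rw [iteratedDeriv_fun_sum fun i hi =>
      contDiffAt_const.mul
        ((hp i hi).of_le (by exact_mod_cast hk : (k : WithTop ℕ∞) ≤ m)).contDiffAt]
    refine Finset.sum_congr rfl fun i _ => ?_
    rw [iteratedDeriv_const_mul_field]
    ring
  have hcoeff : ∀ i ∈ s,
      |c i t * iteratedDeriv k (p i) θ * (descPochhammer ℝ j).eval (r i)| ≤ Mc * Mp * A := by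
    intro i hi
    rw [abs_mul, abs_mul]
    gcongr
    · exact hMc _ (Set.mem_iUnion₂_of_mem hi (Set.mem_range_self t))
    · exact hMp _ (Set.mem_iUnion₂_of_mem hi (Set.mem_iUnion₂_of_mem
        (Finset.mem_range_succ_iff.2 hk) (Set.mem_range_self θ)))
    · exact hA _ (Set.mem_iUnion₂_of_mem hi (Set.mem_iUnion₂_of_mem
        (Finset.mem_range_succ_iff.2 hj) (Set.mem_singleton _)))
  rw [hsep]
  calc _ ≤ (∑ i ∈ s, |c i t * iteratedDeriv k (p i) θ * (descPochhammer ℝ j).eval (r i)|) *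
        x ^ (ρ - j) := abs_iteratedDeriv_sum_mul_rpow_le s _ r j hr hx
    _ ≤ s.card * (Mc * Mp * A) * x ^ (ρ - j) := by
      gcongr
      simpa using Finset.sum_le_card_nsmul s _ _ hcoeff
    _ ≤ (s.card * (Mc * Mp * A) + 1) * x ^ (ρ - j) := by
      gcongr
      linarith

theorem one_div_mul_div_two_mul_sub_one_le_half {n i : ℕ} (hi : i ≤ 2 * n) :
    1 / (n + 2 : ℝ) * (i + 1) / (2 * ((n + 1) / (n + 2))) - 1 ≤ 1 / 2 := by
  have hi' : (i : ℝ) ≤ 2 * n := by exact_mod_cast hi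
  have hsimp : 1 / (n + 2 : ℝ) * (i + 1) / (2 * ((n + 1) / (n + 2))) = (i + 1) / (2 * n + 2) := by
    field_simp
  have hle : ((i : ℝ) + 1) / (2 * n + 2) ≤ 1 := (div_le_one (by positivity)).2 (by linarith)
  linarith

theorem g1_derivative_estimates_general
    (n : ℕ)
    (C S : ℝ → ℝ)
    (hC' : ∀ t, HasDerivAt C (S t) t)
    (T₀ : ℝ)
    (α β a d : ℝ)
    (hα : α = 1 / (n + 2)) (hβ : β = (n + 1) / (n + 2))
    (p : ℕ → ℝ → ℝ)
    (hp : ∀ i ≤ 2 * n, ContDiff ℝ 5 (p i))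
    (hpper : ∀ i ≤ 2 * n, ∀ t : ℝ, p i (t + 1) = p i t)
    (μ : ℕ → ℝ → ℝ → ℝ)
    (hμ : ∀ i : ℕ, ∀ θ τ : ℝ, μ i θ τ =
      p i θ * (2 * a) ^ (α * ((i : ℝ) + 1)) * d ^ (-(α * ((i : ℝ) + 1) / (2 * β))) *
        C ((τ - ⌊τ⌋) * T₀ / 2) ^ (i + 1) / ((i : ℝ) + 1))
    (g₁ : ℝ → ℝ → ℝ → ℝ)
    (hg₁ : ∀ I θ τ : ℝ, g₁ I θ τ =
      ∑ i ∈ Finset.range (2 * n + 1),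
        (2 * β * d ^ (1 / (2 * β)))⁻¹ * μ i θ τ * I ^ (α * ((i : ℝ) + 1) / (2 * β) - 1)) :
    ∃ K : ℝ, 0 < K ∧
      ∀ I : ℝ, 1 ≤ I → ∀ θ τ : ℝ, ∀ j k : ℕ, j + k ≤ 5 →
        |iteratedDeriv j (fun I' : ℝ => iteratedDeriv k (fun θ' : ℝ => g₁ I' θ' τ) θ) I|
          ≤ K * I ^ ((1 : ℝ) / 2 - j) := by
  set ρ : ℕ → ℝ := fun i => α * ((i : ℝ) + 1) / (2 * β) - 1
  set A : ℕ → ℝ := fun i => (2 * β * d ^ (1 / (2 * β)))⁻¹ * (2 * a) ^ (α * ((i : ℝ) + 1)) *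
    d ^ (-(α * ((i : ℝ) + 1) / (2 * β))) / ((i : ℝ) + 1)
  set c : ℕ → ℝ → ℝ := fun i τ => A i * C (Int.fract τ * T₀ / 2) ^ (i + 1)
  have hg₁_sep :
      ∀ I θ τ, g₁ I θ τ = ∑ i ∈ Finset.range (2 * n + 1), c i τ * I ^ ρ i * p i θ := by
    intro I θ τ
    rw [hg₁]
    refine Finset.sum_congr rfl fun i _ => ?_
    rw [hμ, Int.self_sub_floor]
    ring
  have hρ : ∀ i ∈ Finset.range (2 * n + 1), ρ i ≤ 1 / 2 := fun i hi => by
    simpa only [ρ, hα, hβ] using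
      one_div_mul_div_two_mul_sub_one_le_half (Finset.mem_range_succ_iff.1 hi)
  have hCcont : Continuous C := continuous_iff_continuousAt.2 fun t => (hC' t).continuousAt
  have hcb : ∀ i ∈ Finset.range (2 * n + 1), IsBounded (Set.range (c i)) := fun i _ =>
    Continuous.isBounded_range_comp_fract (f := fun u => A i * C (u * T₀ / 2) ^ (i + 1))
      (by fun_prop)
  have hp' : ∀ i ∈ Finset.range (2 * n + 1), ContDiff ℝ 5 (p i) :=
    fun i hi => hp i (Finset.mem_range_succ_iff.1 hi)
  have hpb : ∀ i ∈ Finset.range (2 * n + 1), ∀ k ≤ 5,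
      IsBounded (Set.range (iteratedDeriv k (p i))) :=
    fun i hi k hk => Function.Periodic.isBounded_range_iteratedDeriv
      (hpper i (Finset.mem_range_succ_iff.1 hi)) one_ne_zero (hp' i hi) hk
  obtain ⟨K, hK, hbound⟩ :=
    exists_abs_iteratedDeriv_iteratedDeriv_sum_le (m := 5) (N := 5) _ c p ρ hp' hcb hpb hρ
  refine ⟨K, hK, fun I hI θ τ j k hjk => ?_⟩
  simp only [hg₁_sep]
  exact hbound I hI θ τ j (by omega) k (by omega)

/-- Lemma 4.1: With
`g₁(I, θ, τ) = Σ_{i=0}^{2n} (2β·d^(1/(2β)))⁻¹ · μᵢ(θ, τ) · I^(α(i+1)/(2β) − 1)`,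
there is `K > 0` such that for all `I ≥ 1`, all `θ, τ`, and all `j + k ≤ 5`,
`|∂_I^j ∂_θ^k g₁(I, θ, τ)| ≤ K · I^(1/2 − j)`. -/
theorem g1_derivative_estimates
    (n : ℕ) (hn : 1 ≤ n)
    (C S : ℝ → ℝ)
    (hC' : ∀ t, HasDerivAt C (S t) t)
    (hS' : ∀ t, HasDerivAt S (-(C t ^ (2 * n + 1))) t)
    (hC0 : C 0 = 1) (hS0 : S 0 = 0)
    (T₀ : ℝ) (hT₀pos : 0 < T₀)
    (hCper : Function.Periodic C T₀) (hSper : Function.Periodic S T₀)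
    (hT₀min : ∀ T : ℝ, 0 < T → Function.Periodic C T → Function.Periodic S T → T₀ ≤ T)
    (α β a d : ℝ)
    (hα : α = 1 / (n + 2)) (hβ : β = (n + 1) / (n + 2))
    (ha : a = T₀ / α) (hd : d = (2 * a) ^ (2 * β) / (2 * n + 2))
    (p : ℕ → ℝ → ℝ)
    (hp : ∀ i ≤ 2 * n, ContDiff ℝ 5 (p i))
    (hpper : ∀ i ≤ 2 * n, ∀ t : ℝ, p i (t + 1) = p i t)
    (μ : ℕ → ℝ → ℝ → ℝ)
    (hμ : ∀ i : ℕ, ∀ θ τ : ℝ, μ i θ τ =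
      p i θ * (2 * a) ^ (α * ((i : ℝ) + 1)) * d ^ (-(α * ((i : ℝ) + 1) / (2 * β))) *
        C ((τ - ⌊τ⌋) * T₀ / 2) ^ (i + 1) / ((i : ℝ) + 1))
    (g₁ : ℝ → ℝ → ℝ → ℝ)
    (hg₁ : ∀ I θ τ : ℝ, g₁ I θ τ =
      ∑ i ∈ Finset.range (2 * n + 1),
        (2 * β * d ^ (1 / (2 * β)))⁻¹ * μ i θ τ * I ^ (α * ((i : ℝ) + 1) / (2 * β) - 1)) :
    ∃ K : ℝ, 0 < K ∧
      ∀ I : ℝ, 1 ≤ I → ∀ θ τ : ℝ, ∀ j k : ℕ, j + k ≤ 5 →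
        |iteratedDeriv j (fun I' : ℝ => iteratedDeriv k (fun θ' : ℝ => g₁ I' θ' τ) θ) I|
          ≤ K * I ^ ((1 : ℝ) / 2 - j) :=
  g1_derivative_estimates_general n C S hC' T₀ α β a d hα hβ p hp hpper μ hμ g₁ hg₁
end
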